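/- arXiv:2003.08616 — 6 statements merged into one kernel-verified Lean document; each statement's English description precedes it below -/
import Mathlib

section
/- Let T be a standard tableau, s an entry of T, r an integer such that no entry of T lies in the open interval (r,s), and k ≤ s - r a positive integer. Choose integers r < r_1 < ... < r_{k-1} < s, and let T' be the tableau obtained from T by column-inserting r_{k-1}, r_{k-2}, ..., r_1 in that order. Then the column index of r_i in T' equals i for each 1 ≤ i ≤ k-1, and the column index of s in T' equals max(c_T(s), k), where c_T(s) is the column index of s in T. -/
/-- Column insertion of a value into a tableau represented as a list of columns
(each column a strictly increasing list, read top to bottom). The value bumps the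
smallest entry of the first column larger than it (or is appended at the bottom),
and any bumped entry is inserted into the next column. -/
def insertCol : ℕ → List (List ℕ) → List (List ℕ)
  | v, [] => [[v]]
  | v, c :: cs =>
    match c.find? (fun x => v < x) with
    | none => (c ++ [v]) :: cs
    | some x => (c.map fun y => if y = x then v else y) :: insertCol x cs

/-- Place the entry `i` at the bottom of the `j`-th column (0-based). -/
def placeAt (i : ℕ) : ℕ → List (List ℕ) → List (List ℕ)
  | 0, [] => [[i]]
  | 0, c :: cs => (c ++ [i]) :: cs
  | _ + 1, [] => [[i]]
  | j + 1, c :: cs => c :: placeAt i j cs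

/-- The shape of a tableau: the list of its column lengths. -/
def shapeOf (T : List (List ℕ)) : List ℕ := T.map List.length

/-- Index of the first position where two lists differ. -/
def diffIdx : List ℕ → List ℕ → ℕ
  | a :: as, b :: bs => if a = b then diffIdx as bs + 1 else 0
  | _, _ => 0

/-- The Robinson–Schensted pair `(P, Q)` of a word `w = [w 1, …, w n]` (one-line
notation): `P` is obtained by column inserting `w n, w (n-1), …, w 1` into the empty
tableau, and `Q` records, with entry `i`, the box added at the `i`-th insertion step. -/
def RSpair (w : List ℕ) : List (List ℕ) × List (List ℕ) :=
  (w.reverse.zipIdx.map Prod.swap).foldl (fun PQ p =>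
    let P' := insertCol p.2 PQ.1
    (P', placeAt (p.1 + 1) (diffIdx (shapeOf PQ.1) (shapeOf P')) PQ.2)) ([], [])

/-- The Robinson–Schensted `P`-symbol (insertion tableau) of a word. -/
def Psymb (w : List ℕ) : List (List ℕ) := (RSpair w).1

/-- The Robinson–Schensted `Q`-symbol (recording tableau) of a word. -/
def Qsymb (w : List ℕ) : List (List ℕ) := (RSpair w).2

/-- One-line notation (1-based values) of a permutation of `Fin n`. -/
def oneLine {n : ℕ} (w : Equiv.Perm (Fin n)) : List ℕ := List.ofFn fun i => (w i : ℕ) + 1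

/-- The `P`-symbol of a permutation. Two permutations of `S_n` lie in the same right
Kazhdan–Lusztig cell iff their `P`-symbols coincide. -/
def RSP {n : ℕ} (w : Equiv.Perm (Fin n)) : List (List ℕ) := Psymb (oneLine w)

/-- The `Q`-symbol of a permutation. Two permutations of `S_n` lie in the same left
Kazhdan–Lusztig cell iff their `Q`-symbols coincide. -/
def RSQ {n : ℕ} (w : Equiv.Perm (Fin n)) : List (List ℕ) := Qsymb (oneLine w)

/-- A list of columns is a standard tableau: columns are nonempty and strictly
increasing, column lengths weakly decrease, and rows strictly increase. -/
def ColsStandard (T : List (List ℕ)) : Prop :=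
  (∀ c ∈ T, c ≠ [] ∧ c.Pairwise (· < ·)) ∧
  T.Chain' (fun c c' => c'.length ≤ c.length ∧ ∀ i < c'.length, c.getD i 0 < c'.getD i 0)

/-- A standard Young tableau with `n` boxes: standard, with entries exactly `1, …, n`. -/
def IsSYT (n : ℕ) (T : List (List ℕ)) : Prop :=
  ColsStandard T ∧ T.flatten.Perm (List.range' 1 n)

/-- The (1-based) index of the column of `T` containing the entry `s`. -/
def colIndex (T : List (List ℕ)) (s : ℕ) : ℕ := T.findIdx (fun c => c.contains s) + 1

/-- The number of inversions `ℓ(f) = #{(i,j) : i < j, f i > f j}`. -/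
def invNum {N : ℕ} (f : Fin N → ℕ) : ℕ :=
  (Finset.univ.filter fun p : Fin N × Fin N => p.1 < p.2 ∧ f p.2 < f p.1).card

/-- Ehresmann's tableau (rank-matrix) characterisation of the Bruhat order, stated for
arbitrary functions: `f ≤ g` iff `#{i ≤ p : f i ≥ q} ≤ #{i ≤ p : g i ≥ q}` for all `p, q`. -/
def rankLE {N : ℕ} (f g : Fin N → ℕ) : Prop :=
  ∀ p q : ℕ,
    (Finset.univ.filter fun i : Fin N => (i : ℕ) ≤ p ∧ q ≤ f i).card ≤
      (Finset.univ.filter fun i : Fin N => (i : ℕ) ≤ p ∧ q ≤ g i).card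

/-- The Bruhat order on the symmetric group `S_N`. -/
def bruhatLE {N : ℕ} (x y : Equiv.Perm (Fin N)) : Prop :=
  rankLE (fun i => (x i : ℕ)) (fun i => (y i : ℕ))

/-- Equation (2.1) of Lanini–McNamara, in 0-based terms: given `x : Fin n → ℕ`
(0-based one-line values), produce the one-line values of `x' ∈ S_{n+t}`:
`x' i = k + i` for `i < t`; for `i ≥ t`, `x' i = x (i - t)` if `x (i - t) < k`
and `x' i = x (i - t) + t` otherwise. -/
def primeMap (n t k : ℕ) (x : Fin n → ℕ) : Fin (n + t) → ℕ := fun i =>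
  if _h : (i : ℕ) < t then k + i
  else
    have hi : (i : ℕ) - t < n := by omega
    if x ⟨(i : ℕ) - t, hi⟩ < k then x ⟨(i : ℕ) - t, hi⟩ else x ⟨(i : ℕ) - t, hi⟩ + t


/-!
Only the entries in `(r, s]` matter, and every column of `T` is a low part `≤ r` followed by a
sorted high part `≥ s`. Once some of the `r_i` have been inserted, the tableau consists of gap
columns, each holding one inserted `r_i` (increasing from left to right) between a low part and
entries `> s`, followed by columns that are still split. Inserting the next, smaller value `v`
shifts this staircase by one: `v` bumps the value of the first gap column, which bumps that of the
second, and so on, and the last one bumps the smallest high entry `y` of the first split column.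
If `y = s`, then `s` moves one column to the right; otherwise only entries `> s` move. So `r_i`
ends in column `i`, and `s` in column `c_T(s)` unless the staircase has pushed it to column `k`.
-/

namespace ColumnInsertion

def LowHigh (r s : ℕ) (c : List ℕ) : Prop :=
  ∃ L H, c = L ++ H ∧ (∀ x ∈ L, x ≤ r) ∧ (∀ x ∈ H, s ≤ x) ∧ H.Pairwise (· ≤ ·)

/-- Entries need not be distinct and `insertCol` replaces every copy of the bumped entry, so `g`
may occur several times. -/
def LowGapHigh (r s g : ℕ) (c : List ℕ) : Prop :=
  ∃ L H, c = L ++ g :: H ∧ (∀ x ∈ L, x ≤ r) ∧ ∀ x ∈ H, x = g ∨ s < x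

/-- `p` is 0-based, whereas `colIndex` is 1-based. -/
def IsFirstCol (a : ℕ) (U : List (List ℕ)) (p : ℕ) : Prop :=
  a ∈ U.getD p [] ∧ ∀ j < p, a ∉ U.getD j []

variable {r s : ℕ}

lemma insertCol_cons_of_find?_eq_none {v : ℕ} {c : List ℕ} {cs : List (List ℕ)}
    (h : c.find? (v < ·) = none) : insertCol v (c :: cs) = (c ++ [v]) :: cs := by
  simp [insertCol, h]

lemma insertCol_cons_of_find?_eq_some {v y : ℕ} {c : List ℕ} {cs : List (List ℕ)}
    (h : c.find? (v < ·) = some y) :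
    insertCol v (c :: cs) = (c.map fun z => if z = y then v else z) :: insertCol y cs := by
  simp [insertCol, h]

lemma mem_map_replace {a x y : ℕ} {l : List ℕ} :
    a ∈ l.map (fun z => if z = y then x else z) ↔ (a = x ∧ y ∈ l) ∨ (a ∈ l ∧ a ≠ y) := by
  simp only [List.mem_map]
  constructor
  · rintro ⟨z, hz, rfl⟩
    by_cases h : z = y <;> simp_all
  · rintro (⟨rfl, hy⟩ | ⟨ha, hay⟩)
    · exact ⟨y, hy, by simp⟩
    · exact ⟨a, ha, by simp [hay]⟩

lemma map_replace_of_not_mem {x y : ℕ} {l : List ℕ} (h : y ∉ l) :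
    l.map (fun z => if z = y then x else z) = l := by
  conv_rhs => rw [← List.map_id l]
  exact List.map_congr_left fun z hz => if_neg (ne_of_mem_of_not_mem hz h)

lemma find?_append_of_forall_le {v : ℕ} {L : List ℕ} (hL : ∀ x ∈ L, x ≤ r) (hv : r < v)
    (H : List ℕ) : (L ++ H).find? (v < ·) = H.find? (v < ·) := by
  have : L.find? (v < ·) = none :=
    List.find?_eq_none.2 fun x hx => by have := hL x hx; simp only [decide_eq_true_eq]; omega
  simp [List.find?_append, this]

lemma le_of_find?_eq_some {x y : ℕ} {H : List ℕ} (hH : H.Pairwise (· ≤ ·))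
    (hy : H.find? (x < ·) = some y) {a : ℕ} (ha : a ∈ H) (hxa : x < a) : y ≤ a := by
  induction H with
  | nil => simp at ha
  | cons b t ih =>
    by_cases hb : x < b
    · rw [List.find?_cons_of_pos (by simpa using hb)] at hy
      cases hy
      rcases List.mem_cons.1 ha with rfl | ha
      · exact le_rfl
      · exact List.rel_of_pairwise_cons hH ha
    · rw [List.find?_cons_of_neg (by simpa using hb)] at hy
      rcases List.mem_cons.1 ha with rfl | ha
      · omega
      · exact ih hH.of_cons hy ha

lemma pairwise_map_replace {H : List ℕ} (hH : H.Pairwise (· ≤ ·)) {x y : ℕ}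
    (hy : H.find? (x < ·) = some y) :
    (H.map fun z => if z = y then x else z).Pairwise (· ≤ ·) := by
  have hxy : x < y := by simpa using List.find?_some hy
  rw [List.pairwise_map]
  refine hH.imp_of_mem fun {a b} ha _ hab => ?_
  by_cases hay : a = y <;> by_cases hby : b = y <;>
    simp only [hay, hby, if_true, if_false, le_refl]
  · omega
  · by_contra hxa
    have := le_of_find?_eq_some hH hy ha (by omega)
    omega
  · exact hab

lemma lowHigh_of_pairwise {c : List ℕ} (hc : c.Pairwise (· < ·))
    (hgap : ∀ x ∈ c, x ≤ r ∨ s ≤ x) : LowHigh r s c := by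
  induction c with
  | nil => exact ⟨[], [], rfl, by simp, by simp, List.Pairwise.nil⟩
  | cons a t ih =>
    rcases hgap a List.mem_cons_self with ha | ha
    · obtain ⟨L, H, rfl, hL, hH, hHs⟩ :=
        ih hc.of_cons fun x hx => hgap x (List.mem_cons_of_mem _ hx)
      exact ⟨a :: L, H, rfl, by simpa [ha] using hL, hH, hHs⟩
    · refine ⟨[], a :: t, rfl, by simp, fun x hx => ?_, hc.imp le_of_lt⟩
      rcases List.mem_cons.1 hx with rfl | hx
      · exact ha
      · exact ha.trans (List.rel_of_pairwise_cons hc hx).le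

lemma LowHigh.append_of_find?_eq_none {c : List ℕ} (hc : LowHigh r s c) {x : ℕ} (hsx : s ≤ x)
    (hx : c.find? (x < ·) = none) : LowHigh r s (c ++ [x]) := by
  obtain ⟨L, H, rfl, hL, hH, hHs⟩ := hc
  have hHx : ∀ z ∈ H, z ≤ x := fun z hz => by
    simpa using List.find?_eq_none.1 hx z (List.mem_append_right L hz)
  refine ⟨L, H ++ [x], by simp, hL, fun z hz => ?_, ?_⟩
  · rcases List.mem_append.1 hz with hz | hz
    · exact hH z hz
    · simpa [List.mem_singleton.1 hz] using hsx
  · exact List.pairwise_append.2 ⟨hHs, by simp, by simpa using hHx⟩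

lemma LowHigh.map_replace {c : List ℕ} (hc : LowHigh r s c) (hrs : r < s) {x y : ℕ}
    (hsx : s ≤ x) (hy : c.find? (x < ·) = some y) :
    LowHigh r s (c.map fun z => if z = y then x else z) := by
  obtain ⟨L, H, rfl, hL, hH, hHs⟩ := hc
  rw [find?_append_of_forall_le hL (by omega)] at hy
  have hxy : x < y := by simpa using List.find?_some hy
  have hLy : y ∉ L := fun h => by have := hL y h; omega
  refine ⟨L, H.map fun z => if z = y then x else z, by rw [List.map_append,
    map_replace_of_not_mem hLy], hL, fun z hz => ?_, pairwise_map_replace hHs hy⟩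
  rcases mem_map_replace.1 hz with ⟨rfl, -⟩ | ⟨hz, -⟩
  · exact hsx
  · exact hH z hz

/-- Only entries larger than `x ≥ s` are bumped, so `s` stays put unless `x = s` itself. -/
lemma insertCol_of_le (hrs : r < s) {x : ℕ} (hsx : s ≤ x) {cs : List (List ℕ)}
    (hcs : ∀ c ∈ cs, LowHigh r s c) :
    (∀ c ∈ insertCol x cs, LowHigh r s c) ∧
      ∀ j, s ∈ (insertCol x cs).getD j [] ↔ s ∈ cs.getD j [] ∨ (j = 0 ∧ x = s) := by
  induction cs generalizing x with
  | nil =>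
    refine ⟨fun c hc => ?_, fun j => ?_⟩
    · obtain rfl : c = [x] := by simpa [insertCol] using hc
      exact ⟨[], [x], rfl, by simp, by simpa using hsx, by simp⟩
    · cases j <;> simp [insertCol, eq_comm]
  | cons c cs ih =>
    have hc := hcs c List.mem_cons_self
    have hcs' := fun c hc => hcs c (List.mem_cons_of_mem _ hc)
    cases hy : c.find? (x < ·) with
    | none =>
      rw [insertCol_cons_of_find?_eq_none hy]
      refine ⟨?_, fun j => ?_⟩
      · simpa using ⟨hc.append_of_find?_eq_none hsx hy, hcs'⟩
      · cases j <;> simp [eq_comm]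
    | some y =>
      rw [insertCol_cons_of_find?_eq_some hy]
      have hxy : x < y := by simpa using List.find?_some hy
      obtain ⟨ih₁, ih₂⟩ := ih (by omega : s ≤ y) hcs'
      refine ⟨?_, fun j => ?_⟩
      · simpa using ⟨hc.map_replace hrs hsx hy, ih₁⟩
      · cases j with
        | zero =>
          have hsy : s ≠ y := by omega
          rw [List.getD_cons_zero, List.getD_cons_zero, mem_map_replace]
          have := List.mem_of_find?_eq_some hy
          simp only [this, hsy, ne_eq, not_false_eq_true, and_true, true_and]
          tauto
        | succ j => simpa [show y ≠ s by omega] using ih₂ j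

lemma LowGapHigh.mem_iff {g : ℕ} {c : List ℕ} (hc : LowGapHigh r s g c) {a : ℕ} (hra : r < a)
    (has : a ≤ s) : a ∈ c ↔ a = g := by
  obtain ⟨L, H, rfl, hL, hH⟩ := hc
  refine ⟨fun ha => ?_, fun ha => by simp [ha]⟩
  rcases List.mem_append.1 ha with ha | ha
  · have := hL a ha; omega
  · rcases List.mem_cons.1 ha with ha | ha
    · exact ha
    · rcases hH a ha with ha | ha
      · exact ha
      · omega

lemma insertCol_cons_of_lowGapHigh {v g : ℕ} {c : List ℕ} (cs : List (List ℕ))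
    (hrv : r < v) (hvg : v < g) (hc : LowGapHigh r s g c) :
    ∃ c', insertCol v (c :: cs) = c' :: insertCol g cs ∧ LowGapHigh r s v c' := by
  obtain ⟨L, H, rfl, hL, hH⟩ := hc
  have hy : (L ++ g :: H).find? (v < ·) = some g := by
    rw [find?_append_of_forall_le hL hrv, List.find?_cons_of_pos (by simpa using hvg)]
  rw [insertCol_cons_of_find?_eq_some hy]
  have hLg : g ∉ L := fun h => by have := hL g h; omega
  refine ⟨_, rfl, L, H.map fun z => if z = g then v else z,
    by simp [map_replace_of_not_mem hLg], hL, fun z hz => ?_⟩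
  rcases mem_map_replace.1 hz with ⟨rfl, -⟩ | ⟨hz, hzg⟩
  · exact Or.inl rfl
  · exact Or.inr ((hH z hz).resolve_left hzg)

/-- `w` bumps the smallest high entry `y` of the first column; `s` moves one column to the right
exactly when `y = s`. -/
lemma insertCol_of_forall_lowHigh (hrs : r < s) {w : ℕ} (hrw : r < w) (hws : w < s)
    {W : List (List ℕ)} (hW : ∀ c ∈ W, LowHigh r s c) :
    ∃ c' W', insertCol w W = c' :: W' ∧ LowGapHigh r s w c' ∧ (∀ c ∈ W', LowHigh r s c) ∧
      ∀ j, s ∈ W'.getD j [] ↔ s ∈ W.getD (j + 1) [] ∨ (j = 0 ∧ s ∈ W.getD 0 []) := by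
  rcases W with _ | ⟨c, cs⟩
  · exact ⟨[w], [], rfl, ⟨[], [], rfl, by simp, by simp⟩, by simp, by simp⟩
  obtain ⟨L, H, rfl, hL, hH, hHs⟩ := hW c List.mem_cons_self
  have hcs := fun c hc => hW c (List.mem_cons_of_mem _ hc)
  have hsL : s ∉ L := fun h => by have := hL s h; omega
  rcases H with _ | ⟨y, H⟩
  · have hnone : (L ++ []).find? (w < ·) = none := by
      rw [find?_append_of_forall_le hL hrw]; rfl
    refine ⟨_, cs, insertCol_cons_of_find?_eq_none hnone, ⟨L, [], by simp, hL, by simp⟩, hcs,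
      fun j => ?_⟩
    simp [hsL]
  have hsy : s ≤ y := hH y List.mem_cons_self
  have hyH : ∀ z ∈ H, y ≤ z := fun z hz => List.rel_of_pairwise_cons hHs hz
  have hsome : (L ++ y :: H).find? (w < ·) = some y := by
    rw [find?_append_of_forall_le hL hrw,
      List.find?_cons_of_pos (by simpa using hws.trans_le hsy)]
  have hLy : y ∉ L := fun h => by have := hL y h; omega
  obtain ⟨hcas₁, hcas₂⟩ := insertCol_of_le hrs hsy hcs
  refine ⟨_, _, insertCol_cons_of_find?_eq_some hsome,
    ⟨L, H.map fun z => if z = y then w else z, by simp [map_replace_of_not_mem hLy], hL,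
      fun z hz => ?_⟩, hcas₁, fun j => ?_⟩
  · rcases mem_map_replace.1 hz with ⟨rfl, -⟩ | ⟨hz, hzy⟩
    · exact Or.inl rfl
    · have := hyH z hz; omega
  · have hsc : s ∈ L ++ y :: H ↔ y = s := by
      refine ⟨fun h => ?_, fun h => by simp [h]⟩
      rcases List.mem_append.1 h with h | h
      · exact absurd h hsL
      · rcases List.mem_cons.1 h with h | h
        · exact h.symm
        · have := hyH s h; omega
    rw [hcas₂ j, List.getD_cons_succ, List.getD_cons_zero, hsc]

lemma insertCol_append_of_forall₂ {gs : List ℕ} {G : List (List ℕ)}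
    (hG : List.Forall₂ (LowGapHigh r s) gs G) {v : ℕ} (hsort : (v :: gs).Pairwise (· < ·))
    (hrv : r < v) (W : List (List ℕ)) :
    ∃ G', insertCol v (G ++ W) = G' ++ insertCol ((v :: gs).getLast (List.cons_ne_nil _ _)) W ∧
      List.Forall₂ (LowGapHigh r s) (v :: gs).dropLast G' := by
  induction hG generalizing v with
  | nil => exact ⟨[], rfl, List.Forall₂.nil⟩
  | @cons g c gs G hc _ ih =>
    have hvg : v < g := List.rel_of_pairwise_cons hsort List.mem_cons_self
    obtain ⟨c', hins, hc'⟩ := insertCol_cons_of_lowGapHigh (G ++ W) hrv hvg hc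
    obtain ⟨G', hins', hG'⟩ := ih hsort.of_cons (hrv.trans hvg)
    refine ⟨c' :: G', ?_, ?_⟩
    · rw [List.cons_append, hins, hins', List.getLast_cons_cons]; rfl
    · rw [List.dropLast_cons_cons]
      exact hG'.cons hc'

lemma colIndex_eq_of_isFirstCol {a p : ℕ} {U : List (List ℕ)} (h : IsFirstCol a U p) :
    colIndex U a = p + 1 := by
  obtain ⟨hp, hlt⟩ := h
  have hpU : p < U.length := by
    by_contra hcon
    rw [List.getD_eq_default _ _ (not_lt.1 hcon)] at hp
    exact List.not_mem_nil hp
  rw [List.getD_eq_getElem _ _ hpU] at hp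
  rw [colIndex, List.findIdx_eq hpU |>.2]
  refine ⟨List.contains_iff_mem.2 hp, fun j hj => Bool.eq_false_iff.2 fun hc => ?_⟩
  rw [← List.getD_eq_getElem _ [] (hj.trans hpU)] at hc
  exact hlt j hj (List.contains_iff_mem.1 hc)

lemma isFirstCol_colIndex_sub_one {a : ℕ} {U : List (List ℕ)} (h : a ∈ U.flatten) :
    IsFirstCol a U (colIndex U a - 1) := by
  obtain ⟨c, hcU, hac⟩ := List.mem_flatten.1 h
  have hlt : U.findIdx (·.contains a) < U.length :=
    List.findIdx_lt_length_of_exists ⟨c, hcU, List.contains_iff_mem.2 hac⟩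
  simp only [colIndex, Nat.add_sub_cancel]
  refine ⟨?_, fun j hj haj => ?_⟩
  · rw [List.getD_eq_getElem _ _ hlt]
    exact List.contains_iff_mem.1 (List.findIdx_getElem (w := hlt))
  · rw [List.getD_eq_getElem _ _ (hj.trans hlt)] at haj
    simpa [haj] using List.not_of_lt_findIdx hj

lemma IsFirstCol.cons {a p : ℕ} {U : List (List ℕ)} (h : IsFirstCol a U p) {c : List ℕ}
    (hac : a ∉ c) : IsFirstCol a (c :: U) (p + 1) := by
  refine ⟨h.1, fun j hj => ?_⟩
  cases j with
  | zero => exact hac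
  | succ j => exact h.2 j (by omega)

lemma IsFirstCol.pred {a p : ℕ} {U U' : List (List ℕ)} (h : IsFirstCol a U p)
    (hU' : ∀ j, a ∈ U'.getD j [] ↔ a ∈ U.getD (j + 1) [] ∨ (j = 0 ∧ a ∈ U.getD 0 [])) :
    IsFirstCol a U' (p - 1) := by
  rcases p with _ | p
  · exact ⟨(hU' 0).2 (Or.inr ⟨rfl, h.1⟩), by simp⟩
  · refine ⟨(hU' p).2 (Or.inl h.1), fun j hj ha => ?_⟩
    rcases (hU' j).1 ha with ha | ⟨-, ha⟩
    · exact h.2 (j + 1) (by omega) ha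
    · exact h.2 0 (by omega) ha

lemma isFirstCol_append_of_forall₂ {gs : List ℕ} {G : List (List ℕ)}
    (hG : List.Forall₂ (LowGapHigh r s) gs G) (hsort : gs.Pairwise (· < ·))
    (hmem : ∀ g ∈ gs, r < g ∧ g < s) (W : List (List ℕ)) {i : ℕ} (hi : i < gs.length) :
    IsFirstCol (gs.getD i 0) (G ++ W) i := by
  induction hG generalizing i with
  | nil => simp at hi
  | @cons g c gs G hc _ ih =>
    have hgs := fun x hx => hmem x (List.mem_cons_of_mem _ hx)
    rcases i with _ | i
    · have hg := hmem g List.mem_cons_self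
      exact ⟨by simp [(hc.mem_iff hg.1 hg.2.le).2 rfl], by simp⟩
    · have hgi : gs.getD i 0 ∈ gs := by
        rw [List.getD_eq_getElem _ _ (by simpa using hi)]; exact List.getElem_mem _
      refine (ih hsort.of_cons hgs (by simpa using hi)).cons fun h => ?_
      have := (hc.mem_iff (hgs _ hgi).1 (hgs _ hgi).2.le).1 h
      have := List.rel_of_pairwise_cons hsort hgi
      omega

lemma IsFirstCol.append_of_forall₂ {p : ℕ} {W : List (List ℕ)} (hW : IsFirstCol s W p)
    (hrs : r < s) {gs : List ℕ} {G : List (List ℕ)} (hG : List.Forall₂ (LowGapHigh r s) gs G)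
    (hgs : ∀ g ∈ gs, g < s) : IsFirstCol s (G ++ W) (gs.length + p) := by
  induction hG with
  | nil => simpa using hW
  | @cons g c gs G hc _ ih =>
    rw [List.length_cons, Nat.add_right_comm]
    refine (ih fun x hx => hgs x (List.mem_cons_of_mem _ hx)).cons fun h => ?_
    have := (hc.mem_iff hrs le_rfl).1 h
    have := hgs g List.mem_cons_self
    omega

def GapState (r s p : ℕ) (gs : List ℕ) (U : List (List ℕ)) : Prop :=
  ∃ G W, U = G ++ W ∧ List.Forall₂ (LowGapHigh r s) gs G ∧ (∀ c ∈ W, LowHigh r s c) ∧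
    IsFirstCol s W p

lemma GapState.insertCol {p : ℕ} {gs : List ℕ} {U : List (List ℕ)} (h : GapState r s p gs U)
    (hrs : r < s) {v : ℕ} (hsort : (v :: gs).Pairwise (· < ·))
    (hmem : ∀ g ∈ v :: gs, r < g ∧ g < s) : GapState r s (p - 1) (v :: gs) (insertCol v U) := by
  obtain ⟨G, W, rfl, hG, hW, hsW⟩ := h
  obtain ⟨G', hins, hG'⟩ :=
    insertCol_append_of_forall₂ hG hsort (hmem v List.mem_cons_self).1 W
  have hw := hmem _ (List.getLast_mem (List.cons_ne_nil v gs))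
  obtain ⟨c', W', hins', hc', hW', hsW'⟩ := insertCol_of_forall_lowHigh hrs hw.1 hw.2 hW
  refine ⟨G' ++ [c'], W', by rw [hins, hins', List.append_assoc]; rfl, ?_, hW', hsW.pred hsW'⟩
  rw [← List.dropLast_append_getLast (List.cons_ne_nil v gs)]
  exact List.rel_append hG' (List.Forall₂.cons hc' .nil)

lemma gapState_foldl (hrs : r < s) {T : List (List ℕ)} (hT : ∀ c ∈ T, LowHigh r s c) {p : ℕ}
    (hp : IsFirstCol s T p) {rs : List ℕ} (hsort : rs.Pairwise (· < ·))
    (hmem : ∀ a ∈ rs, r < a ∧ a < s) :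
    GapState r s (p - rs.length) rs (rs.reverse.foldl (fun U v => insertCol v U) T) := by
  induction rs with
  | nil => exact ⟨[], T, rfl, .nil, hT, hp⟩
  | cons v rs ih =>
    rw [List.reverse_cons, List.foldl_append, List.length_cons, ← Nat.sub_sub]
    exact (ih hsort.of_cons fun a ha => hmem a (List.mem_cons_of_mem _ ha)).insertCol hrs hsort hmem

end ColumnInsertion

open ColumnInsertion

/-- Lemma 2.2(1) of Lanini–McNamara: let `T` be a standard tableau, `s` an entry of `T`,
`r` such that no entry of `T` lies in the open interval `(r, s)`, and `0 < k ≤ s - r`.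
Column inserting `r_{k-1}, …, r_1` (with `r < r_1 < ⋯ < r_{k-1} < s`) into `T` yields `T'`
in which `r_i` lies in column `i` and `s` lies in column `max (c_T s) k`. -/
theorem columns_after_insertion (T : List (List ℕ)) (hT : ColsStandard T) (s r k : ℕ)
    (hs : s ∈ T.flatten) (hgap : ∀ a ∈ T.flatten, ¬(r < a ∧ a < s))
    (hk : 0 < k) (hks : k ≤ s - r)
    (rs : List ℕ) (hlen : rs.length = k - 1) (hsort : rs.Pairwise (· < ·))
    (hmem : ∀ a ∈ rs, r < a ∧ a < s)
    (T' : List (List ℕ)) (hT' : T' = rs.reverse.foldl (fun U v => insertCol v U) T) :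
    (∀ i, i < rs.length → colIndex T' (rs.getD i 0) = i + 1) ∧
    colIndex T' s = max (colIndex T s) k := by
  have hrs : r < s := by omega
  have hlowHigh : ∀ c ∈ T, LowHigh r s c := fun c hc =>
    lowHigh_of_pairwise (hT.1 c hc).2 fun x hx => by
      have := hgap x (List.mem_flatten.2 ⟨c, hc, hx⟩)
      omega
  have hfirst := isFirstCol_colIndex_sub_one hs
  obtain ⟨G, W, rfl, hG, -, hsW⟩ := hT' ▸ gapState_foldl hrs hlowHigh hfirst hsort hmem
  refine ⟨fun i hi => colIndex_eq_of_isFirstCol (isFirstCol_append_of_forall₂ hG hsort hmem W hi),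
    ?_⟩
  rw [colIndex_eq_of_isFirstCol (hsW.append_of_forall₂ hrs hG fun a ha => (hmem a ha).2)]
  have : 0 < colIndex T s := Nat.succ_pos _
  omega
end

section
/- With T, s, r, k, r_1 < ... < r_{k-1}, and T' as in the column-insertion setup, let s' be an entry of T with s' > s, let m = max(c_T(s), k), and let n be the number of entries of T lying in the half-open interval [s, s'). Then either c_{T'}(s') = c_T(s') or c_{T'}(s') ≤ m + n. -/
/-!
Each insertion of a value `v < s'` either leaves `s'` in its column or bumps it along a
path `v < x₁ < ⋯ < x_j = s'`, one column to the right at each step, so that `s'` ends up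
in column `j + 1`, where `x₁, …, x_{j-1}` are distinct entries strictly between `v` and `s'`.
Such entries are either entries of `T`, which by the gap condition lie in `[s, s')`, or
values `rᵢ ≠ v`; hence `j + 1 ≤ n + k`. Later insertions either leave `s'` where it is or
bump it again, so the bound survives the whole sequence of insertions.
-/

theorem colIndex_cons (c : List ℕ) (cs : List (List ℕ)) (a : ℕ) :
    colIndex (c :: cs) a = if a ∈ c then 1 else colIndex cs a + 1 := by
  by_cases h : a ∈ c <;> simp [colIndex, List.findIdx_cons, h]

theorem colIndex_cons_of_not_mem {c : List ℕ} {cs : List (List ℕ)} {a : ℕ} (h : a ∉ c) :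
    colIndex (c :: cs) a = colIndex cs a + 1 := by
  simp [colIndex_cons, h]

theorem colIndex_cons_congr {c c' : List ℕ} {cs cs' : List (List ℕ)} {a : ℕ}
    (h : a ∈ c' ↔ a ∈ c) (hcs : a ∉ c → colIndex cs' a = colIndex cs a) :
    colIndex (c' :: cs') a = colIndex (c :: cs) a := by
  by_cases ha : a ∈ c <;> simp [colIndex_cons, h, ha, hcs]

theorem mem_map_ite_iff_of_ne {α : Type*} [DecidableEq α] {c : List α} {x v a : α} (hv : v ≠ a) (hx : x ≠ a) :
    (a ∈ c.map fun y => if y = x then v else y) ↔ a ∈ c := by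
  grind

theorem mem_flatten_insertCol {a v : ℕ} {W : List (List ℕ)} :
    a ∈ (insertCol v W).flatten ↔ a = v ∨ a ∈ W.flatten := by
  induction W generalizing v with
  | nil => simp [insertCol]
  | cons c cs ih =>
    cases hf : c.find? (fun x => v < x) with
    | none =>
      simp only [insertCol, hf, List.flatten_cons, List.mem_append, List.mem_singleton]
      tauto
    | some x =>
      have hxc : x ∈ c := List.mem_of_find?_eq_some hf
      simp only [insertCol, hf, List.flatten_cons, List.mem_append, ih, List.mem_map]
      grind

theorem colIndex_insertCol_self (v : ℕ) (W : List (List ℕ)) : colIndex (insertCol v W) v = 1 := by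
  cases W with
  | nil => simp [insertCol, colIndex_cons]
  | cons c cs =>
    cases hf : c.find? (fun x => v < x) with
    | none => simp [insertCol, hf, colIndex_cons]
    | some x =>
      have hxc : x ∈ c := List.mem_of_find?_eq_some hf
      simp only [insertCol, hf, colIndex_cons]
      exact if_pos (List.mem_map.2 ⟨x, hxc, by simp⟩)

theorem colIndex_insertCol_of_lt {a : ℕ} :
    ∀ {W : List (List ℕ)} {v : ℕ}, a ∈ W.flatten → a < v →
      colIndex (insertCol v W) a = colIndex W a
  | [], _, h, _ => by simp at h
  | c :: cs, v, h, hav => by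
    cases hf : c.find? (fun x => v < x) with
    | none =>
      simp only [insertCol, hf]
      exact colIndex_cons_congr (by simp; omega) fun _ => rfl
    | some x =>
      have hvx : v < x := by simpa using List.find?_some hf
      simp only [insertCol, hf]
      refine colIndex_cons_congr (mem_map_ite_iff_of_ne (by omega) (by omega)) fun hc => ?_
      exact colIndex_insertCol_of_lt (by simpa [hc] using h) (by omega)

theorem Finset.card_inter_Ioo_lt {α : Type*} [LinearOrder α] [LocallyFiniteOrder α]
    {s t : Finset α} {v x a : α} (hst : s ⊆ t) (hx : x ∈ t) (hvx : v < x) (hxa : x < a) :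
    (s ∩ Finset.Ioo x a).card < (t ∩ Finset.Ioo v a).card := by
  refine Finset.card_lt_card ((Finset.ssubset_iff_of_subset ?_).2 ⟨x, ?_, ?_⟩)
  · exact Finset.inter_subset_inter hst (Finset.Ioo_subset_Ioo_left hvx.le)
  · simp [hx, hvx, hxa]
  · simp

theorem colIndex_insertCol_eq_or_le {a : ℕ} :
    ∀ {W : List (List ℕ)} {v : ℕ}, a ∈ W.flatten → v < a →
      colIndex (insertCol v W) a = colIndex W a ∨
        colIndex (insertCol v W) a ≤ 2 + (W.flatten.toFinset ∩ Finset.Ioo v a).card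
  | [], _, h, _ => by simp at h
  | c :: cs, v, h, hva => by
    cases hf : c.find? (fun x => v < x) with
    | none =>
      left
      simp only [insertCol, hf]
      exact colIndex_cons_congr (by simp; omega) fun _ => rfl
    | some x =>
      have hxc : x ∈ c := List.mem_of_find?_eq_some hf
      have hvx : v < x := by simpa using List.find?_some hf
      simp only [insertCol, hf]
      rcases lt_trichotomy x a with hxa | rfl | hax
      · by_cases hc : a ∈ c
        · left
          exact colIndex_cons_congr (mem_map_ite_iff_of_ne hva.ne hxa.ne) (absurd hc)
        have hcs : a ∈ cs.flatten := by simpa [hc] using h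
        have hcount := Finset.card_inter_Ioo_lt (s := cs.flatten.toFinset)
          (t := (c :: cs).flatten.toFinset) (by intro; simp; tauto) (by simp [hxc]) hvx hxa
        rw [colIndex_cons_of_not_mem (mt (mem_map_ite_iff_of_ne hva.ne hxa.ne).1 hc),
          colIndex_cons_of_not_mem hc]
        rcases colIndex_insertCol_eq_or_le hcs hxa with h | h
        · exact .inl (by rw [h])
        · exact .inr (by omega)
      · -- `a` itself is bumped, to the top of the next column
        right
        rw [colIndex_cons_of_not_mem (by grind), colIndex_insertCol_self]
        omega
      · left
        refine colIndex_cons_congr (mem_map_ite_iff_of_ne hva.ne hax.ne') fun hc => ?_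
        exact colIndex_insertCol_of_lt (by simpa [hc] using h) hax

theorem colIndex_foldl_insertCol_eq_or_le {a B : ℕ} {S : Finset ℕ} :
    ∀ {L : List ℕ} {U : List (List ℕ)}, a ∈ U.flatten →
      (∀ b, b ∈ U.flatten ∨ b ∈ L → b ∈ S) →
      (∀ v ∈ L, v < a ∧ 2 + (S ∩ Finset.Ioo v a).card ≤ B) →
      colIndex (L.foldl (fun W v => insertCol v W) U) a = colIndex U a ∨
        colIndex (L.foldl (fun W v => insertCol v W) U) a ≤ B
  | [], _, _, _, _ => .inl rfl
  | v :: L, U, ha, hS, hL => by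
    obtain ⟨hva, hB⟩ := hL v List.mem_cons_self
    have hcard : (U.flatten.toFinset ∩ Finset.Ioo v a).card ≤ (S ∩ Finset.Ioo v a).card :=
      Finset.card_le_card <| Finset.inter_subset_inter
        (fun b hb => hS b (.inl (List.mem_toFinset.1 hb))) subset_rfl
    have hrest := colIndex_foldl_insertCol_eq_or_le (L := L) (U := insertCol v U)
      (mem_flatten_insertCol.2 (.inr ha))
      (fun b hb => by rw [mem_flatten_insertCol] at hb; grind)
      (fun w hw => hL w (List.mem_cons_of_mem v hw))
    rw [List.foldl_cons]
    rcases colIndex_insertCol_eq_or_le ha hva with h | h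
    · rwa [h] at hrest
    · exact .inr (by rcases hrest with h' | h' <;> omega)

theorem card_entries_Ioo_add_two_le {T : List (List ℕ)} {rs : List ℕ} {r s s' k v : ℕ}
    (hgap : ∀ a ∈ T.flatten, ¬(r < a ∧ a < s)) (hlen : rs.length = k - 1) (hnd : rs.Nodup)
    (hmem : ∀ a ∈ rs, r < a ∧ a < s) (hv : v ∈ rs) :
    2 + ((T.flatten.toFinset ∪ rs.toFinset) ∩ Finset.Ioo v s').card ≤
      k + (T.flatten.filter fun a => decide (s ≤ a ∧ a < s')).length := by
  have hsub : (T.flatten.toFinset ∪ rs.toFinset) ∩ Finset.Ioo v s' ⊆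
      (T.flatten.filter fun a => decide (s ≤ a ∧ a < s')).toFinset ∪ rs.toFinset.erase v := by
    intro a
    have := hmem v hv
    simp only [Finset.mem_inter, Finset.mem_union, List.mem_toFinset, Finset.mem_Ioo,
      List.mem_filter, Finset.mem_erase, decide_eq_true_eq]
    grind
  have hrs : (rs.toFinset.erase v).card + 2 = k := by
    rw [Finset.card_erase_of_mem (List.mem_toFinset.2 hv), List.toFinset_card_of_nodup hnd]
    have := List.length_pos_of_mem hv
    omega
  have := (Finset.card_le_card hsub).trans (Finset.card_union_le _ _)
  have := List.toFinset_card_le (T.flatten.filter fun a => decide (s ≤ a ∧ a < s'))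
  omega

theorem column_after_insertion_of_larger_entry_general (T : List (List ℕ))
    (s r k : ℕ)
    (hgap : ∀ a ∈ T.flatten, ¬(r < a ∧ a < s))
    (rs : List ℕ) (hlen : rs.length = k - 1) (hsort : rs.Pairwise (· < ·))
    (hmem : ∀ a ∈ rs, r < a ∧ a < s)
    (T' : List (List ℕ)) (hT' : T' = rs.reverse.foldl (fun U v => insertCol v U) T)
    (s' : ℕ) (hs' : s' ∈ T.flatten) (hss' : s < s')
    (m n₀ : ℕ) (hm : m = max (colIndex T s) k)
    (hn : n₀ = (T.flatten.filter fun a => decide (s ≤ a ∧ a < s')).length) :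
    colIndex T' s' = colIndex T s' ∨ colIndex T' s' ≤ m + n₀ := by
  subst hT' hm hn
  have hS : ∀ b, b ∈ T.flatten ∨ b ∈ rs.reverse → b ∈ T.flatten.toFinset ∪ rs.toFinset := by
    simp
  have hB : ∀ v ∈ rs.reverse, v < s' ∧ 2 + ((T.flatten.toFinset ∪ rs.toFinset) ∩
      Finset.Ioo v s').card ≤ k + (T.flatten.filter fun a => decide (s ≤ a ∧ a < s')).length := by
    intro v hv
    rw [List.mem_reverse] at hv
    exact ⟨(hmem v hv).2.trans hss', card_entries_Ioo_add_two_le hgap hlen hsort.nodup hmem hv⟩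
  exact (colIndex_foldl_insertCol_eq_or_le hs' hS hB).imp_right fun h => h.trans (by omega)

/-- Lemma 2.2(2) of Lanini–McNamara: in the column-insertion setup of Lemma 2.2, if `s'`
is an entry of `T` with `s' > s`, `m = max (c_T s) k` and `n₀` is the number of entries of
`T` in `[s, s')`, then either `c_{T'} s' = c_T s'` or `c_{T'} s' ≤ m + n₀`. -/
theorem column_after_insertion_of_larger_entry (T : List (List ℕ)) (hT : ColsStandard T)
    (s r k : ℕ)
    (hs : s ∈ T.flatten) (hgap : ∀ a ∈ T.flatten, ¬(r < a ∧ a < s))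
    (hk : 0 < k) (hks : k ≤ s - r)
    (rs : List ℕ) (hlen : rs.length = k - 1) (hsort : rs.Pairwise (· < ·))
    (hmem : ∀ a ∈ rs, r < a ∧ a < s)
    (T' : List (List ℕ)) (hT' : T' = rs.reverse.foldl (fun U v => insertCol v U) T)
    (s' : ℕ) (hs' : s' ∈ T.flatten) (hss' : s < s')
    (m n₀ : ℕ) (hm : m = max (colIndex T s) k)
    (hn : n₀ = (T.flatten.filter fun a => decide (s ≤ a ∧ a < s')).length) :
    colIndex T' s' = colIndex T s' ∨ colIndex T' s' ≤ m + n₀ :=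
  column_after_insertion_of_larger_entry_general T s r k hgap rs hlen hsort hmem T' hT' s' hs' hss'
    m n₀ hm hn
end

section
/- In the construction of Theorem 2.4 (given x, y ∈ S_n, producing v, w ∈ S_N in the same right cell whose last-n patterns are x and y), one can always take N ≤ n(n+1)/2. -/
/-!
Let `stair n` be the standard tableau of staircase shape `(n, n - 1, …, 1)` whose entries
`0, 1, …, n(n+1)/2 - 1` fill its antidiagonals one after another, each from the bottom left to
the top right. For `x ∈ S_n`, the word `stairWord x` lists the antidiagonals `n - 1, …, 1` with
their top entries removed, followed by the top entries in the relative order of `x`. Its column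
insertion tableau is `stair n` whatever `x` is. By induction on `n`: the largest top entry, being
larger than every letter inserted after it, is only carried to the right by the later insertions,
so before the last antidiagonal is inserted the tableau is `stair (n - 1)` with that entry attached
to some column; inserting the rest of the last antidiagonal in decreasing order then moves it into
a column of its own, which completes `stair n`.
-/

section ColumnInsertion

variable {v M : ℕ} {c : List ℕ} {cs T : List (List ℕ)}

theorem insertCol_cons_of_forall_le (h : ∀ a ∈ c, a ≤ v) :
    insertCol v (c :: cs) = (c ++ [v]) :: cs := by
  have : c.find? (fun x => v < x) = none := by simpa using h
  simp [insertCol, this]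

theorem insertCol_append_singleton_cons {b : ℕ} (h : ∀ a ∈ c, a ≤ v) (hvb : v < b) :
    insertCol v ((c ++ [b]) :: cs) = (c ++ [v]) :: insertCol b cs := by
  have hc : c.find? (fun x => v < x) = none := by simpa using h
  have hb : ∀ a ∈ c, a ≠ b := fun a ha hab => (h a ha).not_gt (hab ▸ hvb)
  simp only [insertCol, List.find?_append, hc, Option.none_or, List.find?_singleton,
    decide_eq_true hvb, if_true, List.map_append, List.map_singleton, List.cons.injEq, and_true]
  rw [List.map_congr_left (g := id) fun a ha => (if_neg (hb a ha) : _ = a), List.map_id]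

theorem insertCol_eq_placeAt_zero (h : ∀ a ∈ T.flatten, a < v) :
    insertCol v T = placeAt v 0 T := by
  cases T with
  | nil => rfl
  | cons c cs => exact insertCol_cons_of_forall_le fun a ha => (h a (by simp [ha])).le

theorem flatten_insertCol_subset (v : ℕ) (T : List (List ℕ)) :
    (insertCol v T).flatten ⊆ v :: T.flatten := by
  induction T generalizing v with
  | nil => simp [insertCol]
  | cons c cs ih =>
    intro a ha
    rcases hf : c.find? (fun x => v < x) with _ | x
    · simp only [insertCol, hf, List.flatten_cons, List.mem_append, List.mem_singleton] at ha
      simp only [List.flatten_cons, List.mem_cons, List.mem_append]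
      tauto
    · simp only [insertCol, hf, List.flatten_cons, List.mem_append, List.mem_map] at ha
      have hx : x ∈ c := List.mem_of_find?_eq_some hf
      simp only [List.flatten_cons, List.mem_cons, List.mem_append]
      rcases ha with ⟨y, hy, rfl⟩ | ha
      · split_ifs <;> tauto
      · rcases List.mem_cons.mp (ih x ha) with rfl | ha <;> tauto

theorem flatten_foldr_insertCol_subset (u : List ℕ) (T : List (List ℕ)) :
    (u.foldr insertCol T).flatten ⊆ u ++ T.flatten := by
  induction u with
  | nil => simp
  | cons v u ih =>
    refine List.Subset.trans (flatten_insertCol_subset v _) ?_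
    simpa using List.subset_cons_of_subset v ih

theorem insertCol_map_of_strictMono {f : ℕ → ℕ} (hf : StrictMono f) (v : ℕ) (T : List (List ℕ)) :
    insertCol (f v) (T.map (List.map f)) = (insertCol v T).map (List.map f) := by
  induction T generalizing v with
  | nil => simp [insertCol]
  | cons c cs ih =>
    rcases hc : c.find? (fun x => v < x) with _ | x
    · simp [insertCol, List.find?_map, hf.lt_iff_lt, hc]
    · simp only [List.map_cons, insertCol, List.find?_map, Function.comp_def, hf.lt_iff_lt, hc,
        Option.map_some, ih, List.map_map, List.cons.injEq, and_true]
      exact List.map_congr_left fun a _ => by simp [hf.injective.eq_iff, apply_ite f]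

theorem placeAt_of_length_le {d : ℕ} (h : T.length ≤ d) : placeAt M d T = T ++ [[M]] := by
  induction T generalizing d with
  | nil => cases d <;> rfl
  | cons c cs ih =>
    cases d with
    | zero => simp at h
    | succ d => exact congrArg (c :: ·) (ih (by simpa using h))

theorem placeAt_append_of_length_le {d : ℕ} {A B : List (List ℕ)} (h : A.length ≤ d) :
    placeAt M d (A ++ B) = A ++ placeAt M (d - A.length) B := by
  induction A generalizing d with
  | nil => rfl
  | cons c A ih =>
    cases d with
    | zero => simp at h
    | succ d => exact congrArg (c :: ·) (by simpa using ih (by simpa using h))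

/-- An entry `M` larger than all others can only be bumped to the bottom of the next column. -/
theorem exists_insertCol_placeAt (hv : v < M) (d : ℕ) (hT : ∀ a ∈ T.flatten, a < M) :
    ∃ d', insertCol v (placeAt M d T) = placeAt M d' (insertCol v T) := by
  induction T generalizing v d with
  | nil =>
    refine ⟨1, ?_⟩
    have h := insertCol_append_singleton_cons (c := []) (cs := []) (by simp) hv
    cases d <;> exact h
  | cons c cs ih =>
    have hc : ∀ a ∈ c, a < M := fun a ha => hT a (by simp [ha])
    have hcs : ∀ a ∈ cs.flatten, a < M := fun a ha => hT a (by simp_all)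
    rcases hf : c.find? (fun x => v < x) with _ | x
    · have hle : ∀ a ∈ c, a ≤ v := by simpa using hf
      rw [insertCol_cons_of_forall_le hle]
      cases d with
      | zero =>
        refine ⟨1, ?_⟩
        rw [show placeAt M 0 (c :: cs) = (c ++ [M]) :: cs from rfl,
          insertCol_append_singleton_cons hle hv, insertCol_eq_placeAt_zero hcs]
        rfl
      | succ d => exact ⟨d + 1, by simp only [placeAt, insertCol, hf]⟩
    · have hxM : x < M := hc x (List.mem_of_find?_eq_some hf)
      cases d with
      | zero =>
        refine ⟨0, ?_⟩
        have hf' : (c ++ [M]).find? (fun x => v < x) = some x := by simp [hf]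
        simp only [placeAt, insertCol, hf, hf', List.map_append, List.map_singleton,
          if_neg hxM.ne']
      | succ d =>
        obtain ⟨d', hd'⟩ := ih hxM d hcs
        exact ⟨d' + 1, by simp only [placeAt, insertCol, hf, hd']⟩

theorem exists_foldr_insertCol_placeAt {u : List ℕ} (hu : ∀ v ∈ u, v < M) (d : ℕ)
    (hT : ∀ a ∈ T.flatten, a < M) :
    ∃ d', u.foldr insertCol (placeAt M d T) = placeAt M d' (u.foldr insertCol T) := by
  induction u with
  | nil => exact ⟨d, rfl⟩
  | cons v u ih =>
    obtain ⟨d₁, hd₁⟩ := ih fun w hw => hu w (List.mem_cons_of_mem v hw)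
    have hbound : ∀ a ∈ (u.foldr insertCol T).flatten, a < M := fun a ha => by
      rcases List.mem_append.mp (flatten_foldr_insertCol_subset u T ha) with h | h
      exacts [hu a (List.mem_cons_of_mem v h), hT a h]
    obtain ⟨d₂, hd₂⟩ := exists_insertCol_placeAt (hu v List.mem_cons_self) d₁ hbound
    exact ⟨d₂, by rw [List.foldr_cons, hd₁, hd₂, List.foldr_cons]⟩

end ColumnInsertion

theorem Psymb_eq_foldr (w : List ℕ) : Psymb w = w.foldr insertCol [] := by
  rw [Psymb, RSpair,
    ← List.foldl_hom Prod.fst (g₂ := fun T p => insertCol p.2 T) (fun _ _ => rfl), List.foldl_map]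
  simp only [Prod.snd_swap]
  rw [← List.foldl_map (f := Prod.fst) (g := fun T v => insertCol v T), List.zipIdx_map_fst,
    List.foldl_reverse]

theorem Psymb_cons (v : ℕ) (w : List ℕ) : Psymb (v :: w) = insertCol v (Psymb w) := by
  simp [Psymb_eq_foldr]

theorem Psymb_append (u w : List ℕ) : Psymb (u ++ w) = u.foldr insertCol (Psymb w) := by
  simp [Psymb_eq_foldr]

theorem Psymb_map_of_strictMono {f : ℕ → ℕ} (hf : StrictMono f) (w : List ℕ) :
    Psymb (w.map f) = (Psymb w).map (List.map f) := by
  induction w with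
  | nil => simp [Psymb_eq_foldr]
  | cons v w ih => rw [List.map_cons, Psymb_cons, ih, insertCol_map_of_strictMono hf, Psymb_cons]

theorem flatten_Psymb_subset (w : List ℕ) : (Psymb w).flatten ⊆ w := by
  simpa [Psymb_eq_foldr] using flatten_foldr_insertCol_subset w []

def triangular (n : ℕ) : ℕ := n * (n + 1) / 2

theorem triangular_succ (n : ℕ) : triangular (n + 1) = triangular n + n + 1 := by
  rw [triangular, triangular, show (n + 1) * (n + 1 + 1) = n * (n + 1) + (n + 1) * 2 by ring,
    Nat.add_mul_div_right _ _ two_pos]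
  omega

theorem le_triangular (n : ℕ) : n ≤ triangular n := by
  induction n with
  | zero => exact le_rfl
  | succ n ih => rw [triangular_succ]; omega

theorem triangular_strictMono : StrictMono triangular :=
  strictMono_nat_of_lt_succ fun n => by rw [triangular_succ]; omega

/-- The top entry of antidiagonal `j` of the staircase tableau `stair n`, for any `n > j`. -/
def stairTop (j : ℕ) : ℕ := triangular j + j

theorem stairTop_strictMono : StrictMono stairTop :=
  strictMono_nat_of_lt_succ fun n => by simp only [stairTop, triangular_succ]; omega

theorem stairTop_lt_triangular {j n : ℕ} (h : j < n) : stairTop j < triangular n :=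
  calc stairTop j < triangular (j + 1) := by rw [stairTop, triangular_succ]; omega
    _ ≤ triangular n := triangular_strictMono.monotone h

/-- Column `j` of the staircase tableau of shape `(n, n - 1, …, 1)` whose entries
`0, 1, …, triangular n - 1` fill the antidiagonals one after the other. -/
def stairCol (n j : ℕ) : List ℕ := (List.range (n - j)).map fun i => triangular (i + j) + j

def stair (n : ℕ) : List (List ℕ) := (List.range n).map (stairCol n)

theorem lt_triangular_of_mem_stairCol {n j a : ℕ} (h : a ∈ stairCol n j) :
    a < triangular n := by
  obtain ⟨i, hi, rfl⟩ := List.mem_map.mp h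
  have := stairTop_lt_triangular (show i + j < n by simp at hi; omega)
  rw [stairTop] at this
  omega

theorem stairCol_succ {n j : ℕ} (h : j ≤ n) :
    stairCol (n + 1) j = stairCol n j ++ [triangular n + j] := by
  rw [stairCol, show n + 1 - j = n - j + 1 by omega, List.range_succ, List.map_append, ← stairCol,
    List.map_singleton, Nat.sub_add_cancel h]

theorem stair_succ (n : ℕ) :
    stair (n + 1) = (List.range n).map (fun j => stairCol n j ++ [triangular n + j]) ++
      [[stairTop n]] := by
  rw [stair, List.range_succ, List.map_append, List.map_singleton, stairCol_succ le_rfl]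
  congr 1
  · exact List.map_congr_left fun j hj => stairCol_succ (List.mem_range.mp hj).le
  · simp [stairCol, stairTop]

/-- The stages of the insertion of antidiagonal `n` into `stair n`: the columns `j < k` of
`stair n` extended by `b + j`. -/
def sweepState (n k b : ℕ) : List (List ℕ) :=
  (List.range k).map (fun j => stairCol n j ++ [b + j]) ++
    (List.range' k (n - k)).map (stairCol n)

theorem sweepState_zero (n b : ℕ) : sweepState n 0 b = stair n := by
  simp [sweepState, stair, List.range_eq_range']

theorem placeAt_sweepState_self {n d : ℕ} (h : n ≤ d) :
    placeAt (stairTop n) d (sweepState n n (triangular n)) = stair (n + 1) := by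
  rw [placeAt_of_length_le (by simpa [sweepState] using h), stair_succ]
  simp [sweepState]

theorem insertCol_cascade (f : ℕ → List ℕ) (k v : ℕ) (rest : List (List ℕ))
    (hf : ∀ j < k, ∀ a ∈ f j, a ≤ v + j) :
    insertCol v ((List.range k).map (fun j => f j ++ [v + 1 + j]) ++ rest) =
      (List.range k).map (fun j => f j ++ [v + j]) ++ insertCol (v + k) rest := by
  induction k generalizing f v with
  | zero => simp
  | succ k ih =>
    have ih' := ih (fun j => f (j + 1)) (v + 1) fun j hj a ha => by
      have := hf (j + 1) (by omega) a ha; omega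
    simp only [List.range_succ_eq_map, List.map_cons, List.map_map, List.cons_append,
      Function.comp_def, Nat.succ_eq_add_one, add_zero]
    rw [insertCol_append_singleton_cons (by simpa using hf 0 k.succ_pos) (by omega)]
    have e₁ : (fun j => f (j + 1) ++ [v + 1 + (j + 1)]) =
        fun j => f (j + 1) ++ [v + 1 + 1 + j] := by
      funext j; congr 2; omega
    have e₂ : (fun j => f (j + 1) ++ [v + (j + 1)]) = fun j => f (j + 1) ++ [v + 1 + j] := by
      funext j; congr 2; omega
    rw [e₁, ih', e₂, show v + 1 + k = v + (k + 1) by omega]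

theorem insertCol_placeAt_sweepState {n k v M d : ℕ} (hk : k < n) (hkd : k ≤ d)
    (hv : triangular n ≤ v) (hM : v + k < M) :
    insertCol v (placeAt M d (sweepState n k (v + 1))) =
      placeAt M (max d (k + 1)) (sweepState n (k + 1) v) := by
  have hlow : ∀ j, ∀ a ∈ stairCol n j, a < v := fun j a ha =>
    (lt_triangular_of_mem_stairCol ha).trans_le hv
  set rest := (List.range' (k + 1) (n - (k + 1))).map (stairCol n)
  have hrest : ∀ a ∈ rest.flatten, a < M := fun a ha => by
    obtain ⟨_, hl, ha⟩ := List.mem_flatten.mp ha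
    obtain ⟨j, -, rfl⟩ := List.mem_map.mp hl
    exact (hlow j a ha).trans (by omega)
  have hsplit : sweepState n k (v + 1) =
      (List.range k).map (fun j => stairCol n j ++ [v + 1 + j]) ++ stairCol n k :: rest := by
    rw [sweepState, show n - k = n - (k + 1) + 1 by omega, List.range'_succ, List.map_cons]
  have hsplit' : sweepState n (k + 1) v =
      (List.range k).map (fun j => stairCol n j ++ [v + j]) ++
        [stairCol n k ++ [v + k]] ++ rest := by
    rw [sweepState, List.range_succ, List.map_append, List.map_singleton]
  rw [hsplit, placeAt_append_of_length_le (by simpa using hkd),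
    insertCol_cascade _ k v _ fun j _ a ha => (hlow j a ha).le.trans (Nat.le_add_right v j),
    hsplit',
    placeAt_append_of_length_le (by simp)]
  simp only [List.length_append, List.length_map, List.length_range, List.length_singleton,
    List.append_assoc, List.singleton_append]
  congr 1
  obtain ⟨e, rfl⟩ := Nat.exists_eq_add_of_le hkd
  cases e with
  | zero =>
    rw [Nat.add_sub_cancel_left, show placeAt M 0 (stairCol n k :: rest) =
        (stairCol n k ++ [M]) :: rest from rfl,
      insertCol_append_singleton_cons (fun a ha => (hlow k a ha).le.trans (by omega)) hM,
      insertCol_eq_placeAt_zero hrest, show max (k + 0) (k + 1) - (k + 1) = 0 by omega]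
  | succ e =>
    rw [show k + (e + 1) - k = e + 1 by omega,
      show max (k + (e + 1)) (k + 1) - (k + 1) = e by omega]
    exact insertCol_cons_of_forall_le fun a ha => (hlow k a ha).le.trans (by omega)

/-- Wherever `stairTop n` sits, inserting the rest of antidiagonal `n` pushes it into a column of
its own. -/
theorem foldr_insertCol_sweep {n m d : ℕ} (hm : m ≤ n) (hd : n - m ≤ d) :
    (List.range' (triangular n) m).foldr insertCol
      (placeAt (stairTop n) d (sweepState n (n - m) (triangular n + m))) = stair (n + 1) := by
  induction m generalizing d with
  | zero => simpa using placeAt_sweepState_self (by simpa using hd)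
  | succ m ih =>
    have hk : n - (m + 1) + 1 = n - m := by omega
    rw [List.range'_concat, List.foldr_append, List.foldr_cons, List.foldr_nil, one_mul,
      show triangular n + (m + 1) = triangular n + m + 1 by omega,
      insertCol_placeAt_sweepState (by omega) hd (by omega) (by simp only [stairTop]; omega), hk]
    exact ih (by omega) (le_max_right _ _)

/-- The antidiagonals `n - 1, …, 1` of `stair n`, each without its top entry. -/
def diagWord : ℕ → List ℕ
  | 0 => []
  | n + 1 => List.range' (triangular n) n ++ diagWord n

theorem length_diagWord_add (n : ℕ) : (diagWord n).length + n = triangular n := by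
  induction n with
  | zero => rfl
  | succ n ih =>
    simp only [diagWord, List.length_append, List.length_range', triangular_succ]
    omega

theorem lt_triangular_of_mem_diagWord {n a : ℕ} (h : a ∈ diagWord n) : a < triangular n := by
  induction n with
  | zero => simp [diagWord] at h
  | succ n ih =>
    rw [triangular_succ]
    rcases List.mem_append.mp h with h | h
    · simp at h; omega
    · have := ih h; omega

theorem nodup_diagWord (n : ℕ) : (diagWord n).Nodup := by
  induction n with
  | zero => exact List.nodup_nil
  | succ n ih =>
    refine List.nodup_append.mpr ⟨List.nodup_range', ih, fun a ha b hb => ?_⟩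
    have := lt_triangular_of_mem_diagWord hb
    simp at ha; omega

theorem stairTop_notMem_diagWord (j n : ℕ) : stairTop j ∉ diagWord n := by
  induction n with
  | zero => simp [diagWord]
  | succ n ih =>
    simp only [diagWord, List.mem_append, List.mem_range'_1, not_or]
    refine ⟨fun h => ?_, ih⟩
    rcases lt_or_ge j n with hj | hj
    · exact (stairTop_lt_triangular hj).not_ge h.1
    · exact (stairTop_strictMono.monotone hj).not_gt (by simp only [stairTop] at h ⊢; omega)

theorem Psymb_diagWord_append_map_stairTop {n : ℕ} {a : List ℕ} (ha : a.Perm (List.range n)) :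
    Psymb (diagWord n ++ a.map stairTop) = stair n := by
  induction n generalizing a with
  | zero =>
    rw [List.range_zero, List.perm_nil] at ha
    rw [ha]
    rfl
  | succ n ih =>
    obtain ⟨a₁, a₂, rfl⟩ := List.append_of_mem (ha.mem_iff.mpr (List.self_mem_range_succ))
    have ha' : (a₁ ++ a₂).Perm (List.range n) := by
      refine (List.perm_cons n).mp (List.perm_middle.symm.trans (ha.trans ?_))
      rw [List.range_succ]
      exact List.perm_append_singleton n _
    have hlt : ∀ j ∈ a₁ ++ a₂, stairTop j < stairTop n := fun j hj =>
      stairTop_strictMono (List.mem_range.mp (ha'.subset hj))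
    have hu : ∀ v ∈ diagWord n ++ a₁.map stairTop, v < stairTop n := fun v hv => by
      rcases List.mem_append.mp hv with hv | hv
      · exact (lt_triangular_of_mem_diagWord hv).trans_le (Nat.le_add_right _ _)
      · obtain ⟨j, hj, rfl⟩ := List.mem_map.mp hv
        exact hlt j (List.mem_append_left _ hj)
    have hT : ∀ b ∈ (Psymb (a₂.map stairTop)).flatten, b < stairTop n := fun b hb => by
      obtain ⟨j, hj, rfl⟩ := List.mem_map.mp (flatten_Psymb_subset _ hb)
      exact hlt j (List.mem_append_right _ hj)
    have hword : diagWord (n + 1) ++ (a₁ ++ n :: a₂).map stairTop =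
        List.range' (triangular n) n ++
          ((diagWord n ++ a₁.map stairTop) ++ stairTop n :: a₂.map stairTop) := by
      simp [diagWord]
    obtain ⟨d, hd⟩ := exists_foldr_insertCol_placeAt hu 0 hT
    rw [hword, Psymb_append, Psymb_append, Psymb_cons, insertCol_eq_placeAt_zero hT, hd,
      ← Psymb_append, List.append_assoc, ← List.map_append, ih ha',
      ← sweepState_zero n (triangular n + n)]
    simpa using foldr_insertCol_sweep (d := d) le_rfl (by simp)

section StairPerm

variable {n : ℕ} (x : Equiv.Perm (Fin n))

def stairWord : List ℕ := diagWord n ++ List.ofFn fun i => stairTop (x i)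

theorem length_stairWord : (stairWord x).length = triangular n := by
  rw [stairWord, List.length_append, List.length_ofFn, length_diagWord_add]

theorem lt_triangular_of_mem_stairWord {a : ℕ} (h : a ∈ stairWord x) : a < triangular n := by
  rcases List.mem_append.mp h with h | h
  · exact lt_triangular_of_mem_diagWord h
  · obtain ⟨i, rfl⟩ := List.mem_ofFn.mp h
    exact stairTop_lt_triangular (x i).isLt

theorem nodup_stairWord : (stairWord x).Nodup := by
  refine List.nodup_append.mpr ⟨nodup_diagWord n, List.nodup_ofFn.mpr fun i j hij => ?_,
    fun a ha b hb hab => ?_⟩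
  · exact x.injective (Fin.val_injective (stairTop_strictMono.injective hij))
  · obtain ⟨i, rfl⟩ := List.mem_ofFn.mp hb
    exact stairTop_notMem_diagWord _ n (hab ▸ ha)

theorem Psymb_stairWord : Psymb (stairWord x) = stair n := by
  have hperm : (List.ofFn fun i => (x i : ℕ)).Perm (List.range n) := by
    simpa [Function.comp_def, List.ofFn_eq_map (f := Fin.val), List.map_coe_finRange_eq_range]
      using x.ofFn_comp_perm Fin.val
  rw [stairWord, show (List.ofFn fun i => stairTop (x i)) =
      (List.ofFn fun i => (x i : ℕ)).map stairTop by simp [List.map_ofFn, Function.comp_def],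
    Psymb_diagWord_append_map_stairTop hperm]

noncomputable def stairPerm : Equiv.Perm (Fin (triangular n)) :=
  Equiv.ofBijective
    (fun i => ⟨(stairWord x)[(i : ℕ)]'(by rw [length_stairWord]; exact i.isLt),
      lt_triangular_of_mem_stairWord x (List.getElem_mem _)⟩)
    (Finite.injective_iff_bijective.mp fun i j hij =>
      Fin.ext ((nodup_stairWord x).getElem_inj_iff.mp (congrArg Fin.val hij)))

theorem stairPerm_apply (i : Fin (triangular n)) :
    (stairPerm x i : ℕ) = (stairWord x)[(i : ℕ)]'(by rw [length_stairWord]; exact i.isLt) :=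
  rfl

theorem RSP_stairPerm : RSP (stairPerm x) = (stair n).map (List.map (· + 1)) := by
  have hone : oneLine (stairPerm x) = (stairWord x).map (· + 1) :=
    List.ext_getElem (by simp [oneLine, length_stairWord]) fun i _ _ => by
      simp [oneLine, stairPerm_apply]
  rw [RSP, hone, Psymb_map_of_strictMono (f := (· + 1)) (strictMono_id.add_const 1),
    Psymb_stairWord]

theorem stairPerm_apply_of_lt (i : Fin (triangular n)) (hi : (i : ℕ) < triangular n - n) :
    (stairPerm x i : ℕ) = (diagWord n)[(i : ℕ)]'(by have := length_diagWord_add n; omega) := by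
  rw [stairPerm_apply]
  exact List.getElem_append_left _

theorem stairPerm_apply_add (j : Fin n) (h : triangular n - n + j < triangular n) :
    (stairPerm x ⟨triangular n - n + j, h⟩ : ℕ) = stairTop (x j) := by
  have := length_diagWord_add n
  simp only [stairPerm_apply, stairWord]
  rw [List.getElem_append_right (by omega), List.getElem_ofFn]
  congr 3
  ext; simp; omega

end StairPerm

/-- Proposition 2.6 of Lanini–McNamara: in Theorem 2.4 one can always take
`N ≤ n (n + 1) / 2`. -/
theorem same_right_cell_with_given_patterns_bound (n : ℕ) (x y : Equiv.Perm (Fin n)) :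
    ∃ N, ∃ hN : n ≤ N, N ≤ n * (n + 1) / 2 ∧ ∃ v w : Equiv.Perm (Fin N),
      RSP v = RSP w ∧
      (∀ i : Fin N, (i : ℕ) < N - n → v i = w i) ∧
      (∀ i j : Fin n, i < j →
        ((v ⟨N - n + i, by have := i.isLt; omega⟩ : ℕ) <
            (v ⟨N - n + j, by have := j.isLt; omega⟩ : ℕ) ↔ (x i : ℕ) < x j)) ∧
      (∀ i j : Fin n, i < j →
        ((w ⟨N - n + i, by have := i.isLt; omega⟩ : ℕ) <
            (w ⟨N - n + j, by have := j.isLt; omega⟩ : ℕ) ↔ (y i : ℕ) < y j)) := by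
  refine ⟨triangular n, le_triangular n, le_rfl, stairPerm x, stairPerm y,
    by rw [RSP_stairPerm, RSP_stairPerm], fun i hi => ?_, fun i j _ => ?_, fun i j _ => ?_⟩
  · exact Fin.ext (by rw [stairPerm_apply_of_lt x i hi, stairPerm_apply_of_lt y i hi])
  · rw [stairPerm_apply_add, stairPerm_apply_add, stairTop_strictMono.lt_iff_lt]
  · rw [stairPerm_apply_add, stairPerm_apply_add, stairTop_strictMono.lt_iff_lt]
end

section
/- Let x ≤ y in S_n and v ≤ w in S_m with a common embedding Φ = {φ_1 < ... < φ_n} of x into v and of y into w, such that v and w agree outside Φ. If ℓ(w) - ℓ(v) = ℓ(y) - ℓ(x), then the Bruhat intervals [x,y] and [v,w] are isomorphic as posets. -/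
open Finset Function

section RankCount

variable {N : ℕ}

def rankCount (f : Fin N → ℕ) (t q : ℕ) : ℕ := #{i : Fin N | (i : ℕ) < t ∧ q ≤ f i}

theorem rankLE_iff_rankCount_le {f g : Fin N → ℕ} :
    rankLE f g ↔ ∀ t q, rankCount f t q ≤ rankCount g t q := by
  have succ : ∀ (h : Fin N → ℕ) p q,
      rankCount h (p + 1) q = #{i : Fin N | (i : ℕ) ≤ p ∧ q ≤ h i} := by
    simp [rankCount]
  refine ⟨fun H t q => ?_, fun H p q => by simpa only [succ] using H (p + 1) q⟩
  cases t with
  | zero => simp [rankCount]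
  | succ p => simpa only [succ] using H p q

theorem rankCount_succ_add_rankCount_succ (f : Fin N → ℕ) (i : Fin N) (a : ℕ) :
    rankCount f (i + 1) a + rankCount f i (a + 1) =
      rankCount f (i + 1) (a + 1) + rankCount f i a + if f i = a then 1 else 0 := by
  rw [← Fintype.sum_ite_eq' i fun k => if f k = a then 1 else 0]
  simp only [rankCount, card_filter, ← sum_add_distrib]
  refine sum_congr rfl fun k _ => ?_
  have : k = i ↔ (k : ℕ) = i := Fin.ext_iff
  split_ifs <;> omega

theorem apply_eq_of_rankLE_of_rankCount_eq {f u g : Fin N → ℕ} (hfu : rankLE f u)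
    (hug : rankLE u g) (i : Fin N)
    (hfg : ∀ t q : ℕ, (t = i ∨ t = i + 1) → (q = f i ∨ q = f i + 1) →
      rankCount f t q = rankCount g t q) :
    u i = f i := by
  rw [rankLE_iff_rankCount_le] at hfu hug
  have hu : ∀ t q : ℕ, (t = i ∨ t = i + 1) → (q = f i ∨ q = f i + 1) →
      rankCount u t q = rankCount f t q := fun t q ht hq =>
    le_antisymm ((hug t q).trans (hfg t q ht hq).ge) (hfu t q)
  have hf := rankCount_succ_add_rankCount_succ f i (f i)
  have hu' := rankCount_succ_add_rankCount_succ u i (f i)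
  rw [hu _ _ (.inl rfl) (.inl rfl), hu _ _ (.inl rfl) (.inr rfl), hu _ _ (.inr rfl) (.inl rfl),
    hu _ _ (.inr rfl) (.inr rfl)] at hu'
  split_ifs at hf hu' <;> omega

end RankCount

section Thresholds

variable {n : ℕ} {α : Fin n → ℕ}

theorem StrictMono.exists_lt_iff_val_lt (hα : StrictMono α) (t : ℕ) :
    ∃ t', ∀ j : Fin n, α j < t ↔ (j : ℕ) < t' := by
  refine ⟨#{j | α j < t}, fun j => ⟨fun hj => ?_, fun hj => ?_⟩⟩
  · have : Iic j ⊆ ({k | α k < t} : Finset (Fin n)) := fun k hk =>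
      mem_filter.2 ⟨mem_univ k, (hα.monotone (mem_Iic.1 hk)).trans_lt hj⟩
    simpa using card_le_card this
  · by_contra hjt
    have : ({k | α k < t} : Finset (Fin n)) ⊆ Iio j := fun k hk => by
      by_contra hkj
      exact hjt ((hα.monotone (not_lt.1 (mt mem_Iio.2 hkj))).trans_lt (mem_filter.1 hk).2)
    have := card_le_card this
    rw [Fin.card_Iio] at this
    omega

theorem StrictMono.exists_val_lt_iff_lt (hα : StrictMono α) (t' : ℕ) :
    ∃ t, ∀ j : Fin n, (j : ℕ) < t' ↔ α j < t := by
  by_cases ht' : t' < n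
  · exact ⟨α ⟨t', ht'⟩, fun j => (hα.lt_iff_lt (b := ⟨t', ht'⟩)).symm⟩
  · exact ⟨univ.sup α + 1, fun j =>
      ⟨fun _ => Nat.lt_succ_of_le (le_sup (mem_univ j)), fun _ => by omega⟩⟩

theorem rankLE_iff_forall_card_le {β : Fin n → ℕ} (hα : StrictMono α) (hβ : StrictMono β)
    (f g : Fin n → Fin n) :
    rankLE (fun j => (f j : ℕ)) (fun j => (g j : ℕ)) ↔
      ∀ t q, #{j | α j < t ∧ q ≤ β (f j)} ≤ #{j | α j < t ∧ q ≤ β (g j)} := by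
  have hcount : ∀ {t q t' q' : ℕ}, (∀ j, α j < t ↔ (j : ℕ) < t') →
      (∀ r, β r < q ↔ (r : ℕ) < q') → ∀ h : Fin n → Fin n,
        #{j | α j < t ∧ q ≤ β (h j)} = rankCount (fun j => (h j : ℕ)) t' q' := by
    intro t q t' q' ht hq h
    simp only [rankCount, ← not_lt, ht, hq]
  rw [rankLE_iff_rankCount_le]
  constructor
  · intro H t q
    obtain ⟨t', ht⟩ := hα.exists_lt_iff_val_lt t
    obtain ⟨q', hq⟩ := hβ.exists_lt_iff_val_lt q
    rw [hcount ht hq, hcount ht hq]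
    exact H t' q'
  · intro H t' q'
    obtain ⟨t, ht⟩ := hα.exists_val_lt_iff_lt t'
    obtain ⟨q, hq⟩ := hβ.exists_val_lt_iff_lt q'
    rw [← hcount (fun j => (ht j).symm) (fun r => (hq r).symm) f,
      ← hcount (fun j => (ht j).symm) (fun r => (hq r).symm) g]
    exact H t q

end Thresholds

theorem Fintype.sum_comp_add_sum_compl_range {ι κ M : Type*} [Fintype ι] [Fintype κ]
    [AddCommMonoid M] {φ : ι → κ} [DecidablePred (· ∈ Set.range φ)] (hφ : Injective φ)
    (g : κ → M) :
    ∑ a, g (φ a) + ∑ c : {c // c ∉ Set.range φ}, g c = ∑ b, g b := by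
  rw [← Fintype.sum_subtype_add_sum_subtype (· ∈ Set.range φ) g,
    ← Equiv.sum_comp (Equiv.ofInjective φ hφ)]
  simp

section PatternPositions

variable {n m : ℕ} {φ : Fin n → Fin m}

def patternRankCount (φ : Fin n → Fin m) (F : Fin m → ℕ) (t q : ℕ) : ℕ :=
  #{j | (φ j : ℕ) < t ∧ q ≤ F (φ j)}

theorem rankCount_add_patternRankCount_eq (hφ : Injective φ) {F G : Fin m → ℕ}
    (hFG : ∀ c ∉ Set.range φ, F c = G c) (t q : ℕ) :
    rankCount F t q + patternRankCount φ G t q =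
      rankCount G t q + patternRankCount φ F t q := by
  have split : ∀ H : Fin m → ℕ, rankCount H t q = patternRankCount φ H t q +
      #{c : {c // c ∉ Set.range φ} | (c : ℕ) < t ∧ q ≤ H c} := fun H => by
    simp only [rankCount, patternRankCount, card_filter]
    exact (Fintype.sum_comp_add_sum_compl_range hφ _).symm
  have hoff : #{c : {c // c ∉ Set.range φ} | (c : ℕ) < t ∧ q ≤ F c} =
      #{c : {c // c ∉ Set.range φ} | (c : ℕ) < t ∧ q ≤ G c} :=
    congrArg card (filter_congr fun c _ => by rw [hFG c c.2])
  rw [split F, split G, hoff]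
  ring

theorem rankLE_iff_of_eqOn_compl_range (hφ : StrictMono φ) {ν : Fin n → ℕ}
    (hν : StrictMono ν) {F G : Fin m → ℕ} {f g : Fin n → Fin n} (hF : ∀ j, F (φ j) = ν (f j))
    (hG : ∀ j, G (φ j) = ν (g j)) (hFG : ∀ c ∉ Set.range φ, F c = G c) :
    rankLE F G ↔ rankLE (fun j => (f j : ℕ)) (fun j => (g j : ℕ)) := by
  rw [rankLE_iff_rankCount_le, rankLE_iff_forall_card_le (Fin.val_strictMono.comp hφ) hν]
  refine forall₂_congr fun t q => ?_
  have := rankCount_add_patternRankCount_eq hφ.injective hFG t q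
  simp only [patternRankCount, hF, hG] at this
  simp only [comp_apply]
  omega

def leftInvCount (φ : Fin n → Fin m) (F : Fin m → ℕ) (c : Fin m) : ℕ :=
  #{j | φ j < c ∧ F c < F (φ j)}

def rightInvCount (φ : Fin n → Fin m) (F : Fin m → ℕ) (c : Fin m) : ℕ :=
  #{j | c < φ j ∧ F (φ j) < F c}

theorem invNum_eq_add (hφ : StrictMono φ) (F : Fin m → ℕ) :
    invNum F = invNum (F ∘ φ) +
      ∑ c : {c // c ∉ Set.range φ}, (leftInvCount φ F c + rightInvCount φ F c) +
      #{p : {c // c ∉ Set.range φ} × {c // c ∉ Set.range φ} |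
        (p.1 : Fin m) < p.2 ∧ F p.2 < F p.1} := by
  have split := fun (a : Fin m) =>
    (Fintype.sum_comp_add_sum_compl_range hφ.injective fun b =>
      if a < b ∧ F b < F a then 1 else 0).symm
  simp only [invNum, leftInvCount, rightInvCount, card_filter, Fintype.sum_prod_type, split]
  rw [← Fintype.sum_comp_add_sum_compl_range hφ.injective]
  simp only [sum_add_distrib, hφ.lt_iff_lt, comp_apply]
  rw [sum_comm (γ := Fin n) (α := {c // c ∉ Set.range φ})]
  ring

theorem invNum_strictMono_comp {ν : Fin n → ℕ} (hν : StrictMono ν) (f : Fin n → Fin n) :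
    invNum (fun j => ν (f j)) = invNum (fun j => (f j : ℕ)) := by
  simp only [invNum, hν.lt_iff_lt, Fin.lt_def]

theorem leftInvCount_add_card_lt {F : Fin m → ℕ} (hF : Injective F) {c : Fin m}
    (hc : c ∉ Set.range φ) :
    leftInvCount φ F c + #{j | F (φ j) < F c} = rightInvCount φ F c + #{j | φ j < c} := by
  simp only [leftInvCount, rightInvCount, card_filter, ← sum_add_distrib]
  refine sum_congr rfl fun j _ => ?_
  have h₁ : φ j ≠ c := fun h => hc ⟨j, h⟩
  have h₂ : F (φ j) ≠ F c := hF.ne h₁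
  split_ifs <;> omega

theorem sum_leftInvCount_eq (hφ : StrictMono φ) {ν : Fin n → ℕ} (hν : StrictMono ν)
    {F G : Fin m → ℕ} (hF : Injective F) (hG : Injective G) {f g : Equiv.Perm (Fin n)}
    (hFν : ∀ j, F (φ j) = ν (f j)) (hGν : ∀ j, G (φ j) = ν (g j))
    (hFG : ∀ c ∉ Set.range φ, F c = G c)
    (hlen : invNum G + invNum (fun j => (f j : ℕ)) = invNum F + invNum (fun j => (g j : ℕ))) :
    ∑ c : {c // c ∉ Set.range φ}, leftInvCount φ F c =
      ∑ c : {c // c ∉ Set.range φ}, leftInvCount φ G c := by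
  have hdecF := invNum_eq_add hφ F
  have hdecG := invNum_eq_add hφ G
  rw [show F ∘ φ = fun j => ν (f j) from funext hFν, invNum_strictMono_comp hν] at hdecF
  rw [show G ∘ φ = fun j => ν (g j) from funext hGν, invNum_strictMono_comp hν] at hdecG
  have hoff : #{p : {c // c ∉ Set.range φ} × {c // c ∉ Set.range φ} |
        (p.1 : Fin m) < p.2 ∧ F p.2 < F p.1} =
      #{p : {c // c ∉ Set.range φ} × {c // c ∉ Set.range φ} |
        (p.1 : Fin m) < p.2 ∧ G p.2 < G p.1} :=
    congrArg card (filter_congr fun p _ => by rw [hFG _ p.1.2, hFG _ p.2.2])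
  -- Right counts are traded for left ones; the correction terms only see the common value set
  -- `range ν` and the common value `F c = G c`.
  have trade : ∀ {H : Fin m → ℕ} {h : Equiv.Perm (Fin n)}, Injective H →
      (∀ j, H (φ j) = ν (h j)) →
      ∑ c : {c // c ∉ Set.range φ}, (leftInvCount φ H c + rightInvCount φ H c) +
          ∑ c : {c // c ∉ Set.range φ}, #{j | φ j < c} =
        2 * ∑ c : {c // c ∉ Set.range φ}, leftInvCount φ H c +
          ∑ c : {c // c ∉ Set.range φ}, #{r | ν r < H c} := by
    intro H h hH hHν
    rw [two_mul, ← sum_add_distrib, ← sum_add_distrib, ← sum_add_distrib]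
    refine sum_congr rfl fun c _ => ?_
    have hK : #{j | H (φ j) < H c} = #{r | ν r < H c} := by
      simp only [hHν, card_filter]
      exact Equiv.sum_comp h fun r => if ν r < H c then 1 else 0
    have := leftInvCount_add_card_lt hH c.2
    omega
  have hK : ∑ c : {c // c ∉ Set.range φ}, #{r | ν r < F c} =
      ∑ c : {c // c ∉ Set.range φ}, #{r | ν r < G c} :=
    sum_congr rfl fun c _ => by rw [hFG c c.2]
  have := trade hF hFν
  have := trade hG hGν
  omega

theorem patternRankCount_eq_leftInvCount {F : Fin m → ℕ} (hF : Injective F) {c : Fin m}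
    (hc : c ∉ Set.range φ) {t q : ℕ} (ht : t = c ∨ t = c + 1)
    (hq : q = F c ∨ q = F c + 1) :
    patternRankCount φ F t q = leftInvCount φ F c := by
  refine congrArg card (filter_congr fun j _ => ?_)
  have h₁ : φ j ≠ c := fun h => hc ⟨j, h⟩
  have h₂ : F (φ j) ≠ F c := hF.ne h₁
  omega

theorem leftInvCount_le_of_rankLE (hφ : Injective φ) {F G : Fin m → ℕ} (hF : Injective F)
    (hG : Injective G) (hFG : ∀ c ∉ Set.range φ, F c = G c) (hle : rankLE F G) {c : Fin m}
    (hc : c ∉ Set.range φ) :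
    leftInvCount φ F c ≤ leftInvCount φ G c := by
  have h := rankCount_add_patternRankCount_eq hφ hFG c (F c + 1)
  rw [patternRankCount_eq_leftInvCount hF hc (.inl rfl) (.inr rfl),
    patternRankCount_eq_leftInvCount hG hc (.inl rfl) (.inr (by rw [hFG c hc]))] at h
  have := rankLE_iff_rankCount_le.1 hle c (F c + 1)
  omega

theorem apply_eq_of_rankLE_of_leftInvCount_eq (hφ : Injective φ) {F G U : Fin m → ℕ}
    (hF : Injective F) (hG : Injective G) (hFG : ∀ c ∉ Set.range φ, F c = G c)
    (hFU : rankLE F U) (hUG : rankLE U G) {c : Fin m} (hc : c ∉ Set.range φ)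
    (hleft : leftInvCount φ F c = leftInvCount φ G c) :
    U c = F c := by
  refine apply_eq_of_rankLE_of_rankCount_eq hFU hUG c fun t q ht hq => ?_
  have h := rankCount_add_patternRankCount_eq hφ hFG t q
  rw [patternRankCount_eq_leftInvCount hF hc ht hq,
    patternRankCount_eq_leftInvCount hG hc ht (by rwa [← hFG c hc])] at h
  omega

theorem apply_eq_of_rankLE_of_invNum_eq (hφ : StrictMono φ) {ν : Fin n → ℕ}
    (hν : StrictMono ν) {F G U : Fin m → ℕ} (hF : Injective F) (hG : Injective G)
    {f g : Equiv.Perm (Fin n)} (hFν : ∀ j, F (φ j) = ν (f j)) (hGν : ∀ j, G (φ j) = ν (g j))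
    (hFG : ∀ c ∉ Set.range φ, F c = G c) (hle : rankLE F G)
    (hlen : invNum G + invNum (fun j => (f j : ℕ)) = invNum F + invNum (fun j => (g j : ℕ)))
    (hFU : rankLE F U) (hUG : rankLE U G) {c : Fin m} (hc : c ∉ Set.range φ) :
    U c = F c := by
  have hleft := (sum_eq_sum_iff_of_le fun c _ =>
    leftInvCount_le_of_rankLE hφ.injective hF hG hFG hle c.2).1
    (sum_leftInvCount_eq hφ hν hF hG hFν hGν hFG hlen) ⟨c, hc⟩ (mem_univ _)
  exact apply_eq_of_rankLE_of_leftInvCount_eq hφ.injective hF hG hFG hFU hUG hc hleft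

end PatternPositions

namespace Equiv.Perm

variable {α β : Type*} (ι : α ↪ β)

theorem exists_viaEmbedding_eq {g : Perm β} (hg : ∀ b ∉ Set.range ι, g b = b) :
    ∃ σ : Perm α, σ.viaEmbedding ι = g := by
  have hrange : ∀ b, g b ∈ Set.range ι ↔ b ∈ Set.range ι := fun b => by
    by_cases hb : b ∈ Set.range ι
    · refine iff_of_true (not_not.1 fun hgb => ?_) hb
      exact hgb (by rwa [g.injective (hg _ hgb)])
    · rw [hg b hb]
  let e := Equiv.ofInjective ι ι.injective
  refine ⟨e.trans ((g.subtypePerm hrange).trans e.symm), Equiv.ext fun b => ?_⟩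
  by_cases hb : b ∈ Set.range ι
  · obtain ⟨a, rfl⟩ := hb
    rw [viaEmbedding_apply]
    simp [e, Equiv.apply_ofInjective_symm]
  · rw [viaEmbedding_apply_of_notMem _ _ _ hb, hg b hb]

/-- `v` with its occurrence of the pattern `x` at the positions `ι` replaced by `z`. -/
noncomputable def replacePattern (v : Perm β) (x z : Perm α) : Perm β :=
  v * (x⁻¹ * z).viaEmbedding ι

variable (v : Perm β) (x : Perm α)

theorem replacePattern_apply_embedding (z : Perm α) (a : α) :
    replacePattern ι v x z (ι a) = v (ι (x.symm (z a))) := by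
  simp [replacePattern, viaEmbedding_apply, Perm.inv_def]

theorem replacePattern_apply_of_notMem (z : Perm α) {b : β} (hb : b ∉ Set.range ι) :
    replacePattern ι v x z b = v b := by
  simp [replacePattern, viaEmbedding_apply_of_notMem _ _ _ hb]

theorem replacePattern_self : replacePattern ι v x x = v := by
  rw [replacePattern, inv_mul_cancel, ← viaEmbeddingHom_apply, map_one, mul_one]

theorem replacePattern_injective : Injective (replacePattern ι v x) := fun _ _ h =>
  mul_left_cancel (viaEmbeddingHom_injective ι (mul_left_cancel h))

theorem exists_replacePattern_eq {u : Perm β} (hu : ∀ b ∉ Set.range ι, u b = v b) :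
    ∃ z, replacePattern ι v x z = u := by
  obtain ⟨σ, hσ⟩ := exists_viaEmbedding_eq ι (g := v⁻¹ * u) fun b hb => by
    simp [Perm.inv_def, hu b hb]
  exact ⟨x * σ, by rw [replacePattern, inv_mul_cancel_left, hσ, mul_inv_cancel_left]⟩

end Equiv.Perm

theorem StrictMono.comp_symm_of_lt_iff_lt {ι α : Type*} [LinearOrder ι] [LinearOrder α]
    {g : ι → α} (hg : Injective g) {x : Equiv.Perm ι}
    (h : ∀ j k, j < k → (g j < g k ↔ x j < x k)) : StrictMono (g ∘ x.symm) := by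
  intro r r' hr
  rcases lt_trichotomy (x.symm r) (x.symm r') with hlt | heq | hgt
  · simpa using (h _ _ hlt).2 (by simpa using hr)
  · exact absurd (x.symm.injective heq) hr.ne
  · have := (h _ _ hgt).not.2 (by simpa using hr.asymm)
    exact lt_of_le_of_ne (not_lt.1 this) (hg.ne hgt.ne')

theorem Equiv.image_eq_of_eqOn_compl {β γ : Type*} {e e' : β ≃ γ} {s : Set β}
    (h : Set.EqOn e e' sᶜ) : e '' s = e' '' s := by
  rw [← compl_inj_iff, ← e.image_compl, ← e'.image_compl, h.image_eq]

theorem exists_strictMono_values_of_pattern {n m : ℕ} {φ : Fin n → Fin m} (hφ : Injective φ)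
    {x y : Equiv.Perm (Fin n)} {v w : Equiv.Perm (Fin m)}
    (hxv : ∀ j k : Fin n, j < k → ((v (φ j) : ℕ) < v (φ k) ↔ (x j : ℕ) < x k))
    (hyw : ∀ j k : Fin n, j < k → ((w (φ j) : ℕ) < w (φ k) ↔ (y j : ℕ) < y k))
    (hout : ∀ c ∉ Set.range φ, v c = w c) :
    ∃ ν : Fin n → ℕ, StrictMono ν ∧ (∀ j, (v (φ j) : ℕ) = ν (x j)) ∧
      ∀ j, (w (φ j) : ℕ) = ν (y j) := by
  have hν := StrictMono.comp_symm_of_lt_iff_lt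
    (Fin.val_injective.comp (v.injective.comp hφ)) hxv
  have hν' := StrictMono.comp_symm_of_lt_iff_lt
    (Fin.val_injective.comp (w.injective.comp hφ)) hyw
  have hrange : Set.range ((Fin.val ∘ v ∘ φ) ∘ x.symm) =
      Set.range ((Fin.val ∘ w ∘ φ) ∘ y.symm) := by
    rw [EquivLike.range_comp, EquivLike.range_comp, Set.range_comp, Set.range_comp,
      Set.range_comp, Set.range_comp, Equiv.image_eq_of_eqOn_compl hout]
  have hνν' := (hν.range_inj hν').1 hrange
  refine ⟨_, hν, fun j => by simp, fun j => ?_⟩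
  rw [hνν']
  simp

theorem exists_equiv_interval_of_rel_iff {α β : Type*} {r : α → α → Prop}
    {s : β → β → Prop} (f : α → β) (hf : ∀ a b, s (f a) (f b) ↔ r a b) (hinj : Injective f)
    {x y : α} {x' y' : β} (hx : f x = x') (hy : f y = y')
    (hsurj : ∀ u, s x' u → s u y' → u ∈ Set.range f) :
    ∃ e : {z // r x z ∧ r z y} ≃ {u // s x' u ∧ s u y'},
      ∀ a b, r a.1 b.1 ↔ s (e a).1 (e b).1 := by
  subst hx hy
  refine ⟨Equiv.ofBijective (fun a => ⟨f a, (hf _ _).2 a.2.1, (hf _ _).2 a.2.2⟩) ⟨?_, ?_⟩,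
    fun a b => (hf _ _).symm⟩
  · exact fun a b hab => Subtype.ext (hinj (congrArg Subtype.val hab))
  · rintro ⟨u, hxu, huy⟩
    obtain ⟨z, rfl⟩ := hsurj u hxu huy
    exact ⟨⟨z, (hf _ _).1 hxu, (hf _ _).1 huy⟩, rfl⟩

theorem interval_isomorphic_of_length_difference_general (n m : ℕ)
    (x y : Equiv.Perm (Fin n)) (v w : Equiv.Perm (Fin m))
    (hvw : bruhatLE v w)
    (φ : Fin n → Fin m) (hφ : StrictMono φ)
    (hxv : ∀ j k : Fin n, j < k → ((v (φ j) : ℕ) < v (φ k) ↔ (x j : ℕ) < x k))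
    (hyw : ∀ j k : Fin n, j < k → ((w (φ j) : ℕ) < w (φ k) ↔ (y j : ℕ) < y k))
    (hout : ∀ i : Fin m, (∀ j, φ j ≠ i) → v i = w i)
    (hlen : invNum (fun i => (w i : ℕ)) + invNum (fun i => (x i : ℕ)) =
        invNum (fun i => (v i : ℕ)) + invNum (fun i => (y i : ℕ))) :
    ∃ f : {z : Equiv.Perm (Fin n) // bruhatLE x z ∧ bruhatLE z y} ≃
        {z : Equiv.Perm (Fin m) // bruhatLE v z ∧ bruhatLE z w},
      ∀ a b, bruhatLE a.1 b.1 ↔ bruhatLE (f a).1 (f b).1 := by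
  have hout' : ∀ c ∉ Set.range φ, v c = w c := fun c hc => hout c fun j hj => hc ⟨j, hj⟩
  obtain ⟨ν, hν, hvν, hwν⟩ := exists_strictMono_values_of_pattern hφ.injective hxv hyw hout'
  let ι : Fin n ↪ Fin m := ⟨φ, hφ.injective⟩
  have hR : ∀ z j, (Equiv.Perm.replacePattern ι v x z (φ j) : ℕ) = ν (z j) := fun z j => by
    rw [show φ j = ι j from rfl, Equiv.Perm.replacePattern_apply_embedding]
    exact (hvν _).trans (congrArg ν (x.apply_symm_apply _))
  have hRout : ∀ z, ∀ c ∉ Set.range φ, Equiv.Perm.replacePattern ι v x z c = v c :=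
    fun z c hc => Equiv.Perm.replacePattern_apply_of_notMem ι v x z hc
  have hRy : Equiv.Perm.replacePattern ι v x y = w := by
    ext c
    by_cases hc : c ∈ Set.range φ
    · obtain ⟨j, rfl⟩ := hc
      rw [hR, hwν]
    · rw [hRout y c hc, hout' c hc]
  refine exists_equiv_interval_of_rel_iff (Equiv.Perm.replacePattern ι v x)
    (fun a b => rankLE_iff_of_eqOn_compl_range hφ hν (hR a) (hR b) fun c hc => by
      rw [hRout a c hc, hRout b c hc])
    (Equiv.Perm.replacePattern_injective ι v x) (Equiv.Perm.replacePattern_self ι v x) hRy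
    fun u hvu huw => Equiv.Perm.exists_replacePattern_eq ι v x fun c hc => Fin.ext ?_
  exact apply_eq_of_rankLE_of_invNum_eq hφ hν (Fin.val_injective.comp v.injective)
    (Fin.val_injective.comp w.injective) hvν hwν (fun c hc => congrArg Fin.val (hout' c hc))
    hvw hlen hvu huw hc

/-- Lemma 2.1 of Woo–Yong: if `Φ` is a common pattern embedding of `x ≤ y` into
`v ≤ w`, with `v` and `w` agreeing outside `Φ`, and `ℓ(w) - ℓ(v) = ℓ(y) - ℓ(x)`, then the
Bruhat intervals `[x, y]` and `[v, w]` are isomorphic as posets. -/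
theorem interval_isomorphic_of_length_difference (n m : ℕ)
    (x y : Equiv.Perm (Fin n)) (v w : Equiv.Perm (Fin m))
    (hxy : bruhatLE x y) (hvw : bruhatLE v w)
    (φ : Fin n → Fin m) (hφ : StrictMono φ)
    (hxv : ∀ j k : Fin n, j < k → ((v (φ j) : ℕ) < v (φ k) ↔ (x j : ℕ) < x k))
    (hyw : ∀ j k : Fin n, j < k → ((w (φ j) : ℕ) < w (φ k) ↔ (y j : ℕ) < y k))
    (hout : ∀ i : Fin m, (∀ j, φ j ≠ i) → v i = w i)
    (hlen : invNum (fun i => (w i : ℕ)) + invNum (fun i => (x i : ℕ)) =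
        invNum (fun i => (v i : ℕ)) + invNum (fun i => (y i : ℕ))) :
    ∃ f : {z : Equiv.Perm (Fin n) // bruhatLE x z ∧ bruhatLE z y} ≃
        {z : Equiv.Perm (Fin m) // bruhatLE v z ∧ bruhatLE z w},
      ∀ a b, bruhatLE a.1 b.1 ↔ bruhatLE (f a).1 (f b).1 :=
  interval_isomorphic_of_length_difference_general n m x y v w hvw φ hφ hxv hyw hout hlen
end

section
/- Let x = [2,1,6,5,4,3,8,7] and y = [6,2,8,4,5,1,7,3] in S_8, and let v = [8,9,5,6,2,1,10,7,4,3,12,11] and w = [8,9,5,6,10,2,12,4,7,1,11,3] in S_12. Then P(v) = P(w), v(i) = w(i) for i ≤ 4, the pattern of v in the last 8 positions is x, and the pattern of w in the last 8 positions is y. -/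
section OneLine

variable {n : ℕ}

theorem getD_oneLine (u : Equiv.Perm (Fin n)) (i : Fin n) :
    (oneLine u).getD i 0 = u i + 1 := by
  simp [oneLine, List.getD_eq_getElem?_getD]

theorem val_lt_val_iff_getD_oneLine (u : Equiv.Perm (Fin n)) (i j : Fin n) :
    (u i : ℕ) < u j ↔ (oneLine u).getD i 0 < (oneLine u).getD j 0 := by
  simp only [getD_oneLine, Nat.add_lt_add_iff_right]

theorem apply_eq_apply_iff_getD_oneLine (u u' : Equiv.Perm (Fin n)) (i : Fin n) :
    u i = u' i ↔ (oneLine u).getD i 0 = (oneLine u').getD i 0 := by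
  simp only [getD_oneLine, Nat.add_right_cancel_iff, Fin.val_inj]

end OneLine

/-- Example 2.5 of Lanini–McNamara: for `x = [21654387]`-type data in `S_8` and the
displayed `v, w ∈ S_12`, one has `P(v) = P(w)`, `v` and `w` agree in the first four
positions, and the patterns of `v`, `w` in the last eight positions are `x`, `y`. -/
theorem kashiwara_saito_example (x y : Equiv.Perm (Fin 8)) (v w : Equiv.Perm (Fin 12))
    (hx : oneLine x = [2, 1, 6, 5, 4, 3, 8, 7]) (hy : oneLine y = [6, 2, 8, 4, 5, 1, 7, 3])
    (hv : oneLine v = [8, 9, 5, 6, 2, 1, 10, 7, 4, 3, 12, 11])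
    (hw : oneLine w = [8, 9, 5, 6, 10, 2, 12, 4, 7, 1, 11, 3]) :
    RSP v = RSP w ∧
    (∀ i : Fin 12, (i : ℕ) < 4 → v i = w i) ∧
    (∀ i j : Fin 8, i < j →
      ((v ⟨4 + i, by have := i.isLt; omega⟩ : ℕ) < (v ⟨4 + j, by have := j.isLt; omega⟩ : ℕ) ↔
        (x i : ℕ) < x j)) ∧
    (∀ i j : Fin 8, i < j →
      ((w ⟨4 + i, by have := i.isLt; omega⟩ : ℕ) < (w ⟨4 + j, by have := j.isLt; omega⟩ : ℕ) ↔
        (y i : ℕ) < y j)) := by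
  refine ⟨?_, ?_, ?_, ?_⟩
  · calc RSP v = Psymb [8, 9, 5, 6, 2, 1, 10, 7, 4, 3, 12, 11] := by rw [RSP, hv]
      _ = [[1, 2, 5, 8], [3, 4, 6, 9], [7, 10], [11, 12]] := by decide
      _ = Psymb [8, 9, 5, 6, 10, 2, 12, 4, 7, 1, 11, 3] := by decide
      _ = RSP w := by rw [RSP, hw]
  · simp only [apply_eq_apply_iff_getD_oneLine, hv, hw]
    decide
  · simp only [val_lt_val_iff_getD_oneLine, hv, hx]
    decide
  · simp only [val_lt_val_iff_getD_oneLine, hw, hy]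
    decide
end

section
/- Let x, y ∈ S_n and define x', y' ∈ S_{n+t} by equation (2.1) with the same parameters k and t (with x'(i) = y'(i) = k+i for i ≤ t). Then x ≤ y in Bruhat order if and only if x' ≤ y' in Bruhat order. -/
/-!
The first `t` positions of `x'` and `y'` carry the same values, so they add the same constant
to every rank count. On the remaining positions `x'` is `x` shifted right by `t`, with values
relabelled by a monotone injection; hence the count `#{i ≤ p : x' i ≥ q}` over these positions
equals `#{j ≤ p - t : x j ≥ θ q}` for a threshold `θ q` independent of `x`. Since `θ` is
surjective, comparing all rank counts of `x'` and `y'` is the same as comparing those of `x`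
and `y`.
-/

open Finset

section

variable {n t k : ℕ}

theorem card_filter_fin_add (P : Fin (n + t) → Prop) [DecidablePred P] :
    #{i | P i} = #{i : Fin (n + t) | P i ∧ (i : ℕ) < t} + #{j : Fin n | P (j.addNat t)} := by
  rw [← card_filter_add_card_filter_not (p := fun i : Fin (n + t) => (i : ℕ) < t),
    filter_filter, filter_filter]
  congr 1
  symm
  refine card_bij (fun j _ => j.addNat t) ?_ (fun _ _ _ _ => (Fin.addNat_inj t).mp) ?_
  · intro j hj
    simp only [mem_filter, mem_univ, true_and, Fin.val_addNat] at hj ⊢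
    exact ⟨hj, by omega⟩
  · intro i hi
    simp only [mem_filter, mem_univ, true_and] at hi
    have hi' : (⟨(i : ℕ) - t, by omega⟩ : Fin n).addNat t = i :=
      Fin.ext (by simp only [Fin.val_addNat]; omega)
    exact ⟨_, by simpa only [mem_filter, mem_univ, true_and, hi'] using hi.1, hi'⟩

theorem rankLE_iff_forall_addNat_le {f g : Fin n → ℕ} :
    rankLE f g ↔ ∀ p q : ℕ, #{j : Fin n | (j : ℕ) + t ≤ p ∧ q ≤ f j} ≤
      #{j : Fin n | (j : ℕ) + t ≤ p ∧ q ≤ g j} := by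
  refine ⟨fun h p q => ?_, fun h p q => ?_⟩
  · by_cases htp : t ≤ p
    · have hshift : ∀ j : Fin n, (j : ℕ) + t ≤ p ↔ (j : ℕ) ≤ p - t := fun j => by omega
      simpa only [hshift] using h (p - t) q
    · have hnone : ∀ j : Fin n, ¬ (j : ℕ) + t ≤ p := fun j => by omega
      simp [hnone]
  · simpa only [add_le_add_iff_right] using h (p + t) q

theorem primeMap_of_lt (f : Fin n → ℕ) {i : Fin (n + t)} (hi : (i : ℕ) < t) :
    primeMap n t k f i = k + i := by
  simp only [primeMap, dif_pos hi]

theorem primeMap_addNat (f : Fin n → ℕ) (j : Fin n) :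
    primeMap n t k f (j.addNat t) = if f j < k then f j else f j + t := by
  simp [primeMap]

def primeThreshold (t k q : ℕ) : ℕ := if q ≤ k then q else max k (q - t)

theorem le_primeMap_addNat_iff (f : Fin n → ℕ) (j : Fin n) (q : ℕ) :
    q ≤ primeMap n t k f (j.addNat t) ↔ primeThreshold t k q ≤ f j := by
  rw [primeMap_addNat, primeThreshold]
  split_ifs <;> omega

theorem primeThreshold_surjective : Function.Surjective (primeThreshold t k) := fun q =>
  ⟨if q ≤ k then q else q + t, by unfold primeThreshold; split_ifs <;> omega⟩

theorem card_le_primeMap (f : Fin n → ℕ) (p q : ℕ) :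
    #{i : Fin (n + t) | (i : ℕ) ≤ p ∧ q ≤ primeMap n t k f i} =
      #{i : Fin (n + t) | ((i : ℕ) ≤ p ∧ q ≤ k + i) ∧ (i : ℕ) < t} +
        #{j : Fin n | (j : ℕ) + t ≤ p ∧ primeThreshold t k q ≤ f j} := by
  rw [card_filter_fin_add]
  congr 2
  · exact filter_congr fun i _ => and_congr_left fun hi => by rw [primeMap_of_lt f hi]
  · exact filter_congr fun j _ => by rw [Fin.val_addNat, le_primeMap_addNat_iff]

theorem rankLE_primeMap_iff {f g : Fin n → ℕ} :
    rankLE (primeMap n t k f) (primeMap n t k g) ↔ rankLE f g := by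
  rw [rankLE_iff_forall_addNat_le (f := f) (t := t), rankLE]
  simp only [card_le_primeMap, add_le_add_iff_left]
  refine ⟨fun h p q => ?_, fun h p q => h p _⟩
  obtain ⟨q, rfl⟩ := primeThreshold_surjective (t := t) (k := k) q
  exact h p q

end

theorem primeMap_bruhat_iff_general (n t k : ℕ)
    (x y : Equiv.Perm (Fin n)) :
    bruhatLE x y ↔
      rankLE (primeMap n t k fun j => (x j : ℕ)) (primeMap n t k fun j => (y j : ℕ)) :=
  rankLE_primeMap_iff.symm

/-- The map of equation (2.1) preserves and reflects the Bruhat order: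
`x ≤ y` iff `x' ≤ y'`. -/
theorem primeMap_bruhat_iff (n t k : ℕ) (ht : 1 ≤ t) (hk : k ≤ n)
    (x y : Equiv.Perm (Fin n)) :
    bruhatLE x y ↔
      rankLE (primeMap n t k fun j => (x j : ℕ)) (primeMap n t k fun j => (y j : ℕ)) :=
  primeMap_bruhat_iff_general n t k x y
end
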